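/- arXiv:1003.5009 — 6 statements merged into one kernel-verified Lean document; each statement's English description precedes it below -/
import Mathlib

section
/- For every even nonnegative integer i, the convolution sum ∑_{j even, 0 ≤ j ≤ i} a_j · b_{i-j} equals (1/4)·b_{i+2}, where a_i = (1/(i+2))·C(i, i/2) and b_i = C(i, i/2). -/
open MeasureTheory ProbabilityTheory Finset

noncomputable def aCoef (i : ℕ) : ℝ := (1 / ((i : ℝ) + 2)) * (i.choose (i / 2) : ℝ)

noncomputable def bCoef (i : ℕ) : ℝ := (i.choose (i / 2) : ℝ)

/-!
With `c m = centralBinom m`, even indices give `a (2m) = catalan m / 2` and `b (2m) = c m`, so the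
claim is `2 ∑_{k+l=n} catalan k * c l = c (n+1)`. Since `c (m+1) + 2 catalan m = 4 c m`, this
follows from the classical convolution `∑_{k+l=n} c k * c l = 4^n`, which is proved by induction:
symmetrizing `∑ k c k c l` over the antidiagonal expresses it as `n/2` times the convolution, and
`(k+1) c (k+1) = 2 (2k+1) c k` relates it at `n+1` and `n`.
-/

open Nat

theorem Finset.Nat.two_mul_sum_antidiagonal_fst_mul {R : Type*} [CommSemiring R] (f : ℕ → R)
    (n : ℕ) :
    2 * ∑ p ∈ antidiagonal n, (p.1 : R) * (f p.1 * f p.2)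
      = n * ∑ p ∈ antidiagonal n, f p.1 * f p.2 := by
  rw [two_mul]
  nth_rewrite 2 [← Finset.Nat.sum_antidiagonal_swap]
  rw [← sum_add_distrib, mul_sum]
  refine sum_congr rfl fun p hp => ?_
  rw [Prod.fst_swap, Prod.snd_swap, mul_comm (f p.2), ← add_mul, ← Nat.cast_add,
    mem_antidiagonal.mp hp]

theorem Nat.sum_antidiagonal_centralBinom_mul_centralBinom (n : ℕ) :
    ∑ p ∈ antidiagonal n, p.1.centralBinom * p.2.centralBinom = 4 ^ n := by
  induction n with
  | zero => simp
  | succ n ih =>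
    have hsymm := Finset.Nat.two_mul_sum_antidiagonal_fst_mul centralBinom
    simp only [Nat.cast_id] at hsymm
    have hstep : ∑ p ∈ antidiagonal (n + 1), p.1 * (p.1.centralBinom * p.2.centralBinom)
        = 2 * (2 * ∑ p ∈ antidiagonal n, p.1 * (p.1.centralBinom * p.2.centralBinom))
          + 2 * ∑ p ∈ antidiagonal n, p.1.centralBinom * p.2.centralBinom := by
      rw [Finset.Nat.sum_antidiagonal_succ, zero_mul, zero_add, mul_sum, mul_sum, mul_sum,
        ← sum_add_distrib]
      refine sum_congr rfl fun p _ => ?_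
      rw [← mul_assoc, succ_mul_centralBinom_succ]
      ring
    have h := hsymm (n + 1)
    rw [hstep, hsymm n, ih] at h
    apply Nat.eq_of_mul_eq_mul_left n.add_one_pos
    rw [← h]
    ring

theorem Nat.centralBinom_succ_add_two_mul_catalan (m : ℕ) :
    (m + 1).centralBinom + 2 * catalan m = 4 * m.centralBinom := by
  apply Nat.eq_of_mul_eq_mul_left m.add_one_pos
  rw [mul_add, succ_mul_centralBinom_succ, mul_left_comm, succ_mul_catalan_eq_centralBinom]
  ring

theorem Nat.two_mul_sum_antidiagonal_catalan_mul_centralBinom (n : ℕ) :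
    2 * ∑ p ∈ antidiagonal n, catalan p.1 * p.2.centralBinom = (n + 1).centralBinom := by
  have h := sum_antidiagonal_centralBinom_mul_centralBinom (n + 1)
  rw [pow_succ', ← sum_antidiagonal_centralBinom_mul_centralBinom n, mul_sum,
    Finset.Nat.sum_antidiagonal_succ] at h
  simp only [← mul_assoc, ← centralBinom_succ_add_two_mul_catalan, add_mul, sum_add_distrib,
    centralBinom_zero, one_mul] at h
  rw [mul_sum]
  simp only [mul_assoc] at h ⊢
  omega

theorem Finset.sum_filter_even_range {M : Type*} [AddCommMonoid M] (f : ℕ → M) (n : ℕ) :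
    ∑ j ∈ (range (2 * n + 1)).filter Even, f j = ∑ m ∈ range (n + 1), f (2 * m) := by
  have himage : (range (2 * n + 1)).filter Even = (range (n + 1)).image (2 * ·) := by
    ext j
    simp only [mem_filter, mem_range, mem_image, even_iff_two_dvd]
    constructor
    · rintro ⟨hj, m, rfl⟩
      exact ⟨m, by omega, rfl⟩
    · rintro ⟨m, hm, rfl⟩
      exact ⟨by omega, dvd_mul_right 2 m⟩
  rw [himage, sum_image fun a _ b _ h => by simpa using h]

theorem aCoef_two_mul (m : ℕ) : aCoef (2 * m) = catalan m / 2 := by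
  have h : ((m + 1 : ℕ) : ℝ) * catalan m = m.centralBinom := by
    exact_mod_cast succ_mul_catalan_eq_centralBinom m
  rw [aCoef, Nat.mul_div_cancel_left m two_pos, ← centralBinom_eq_two_mul_choose, ← h]
  push_cast
  field_simp

theorem bCoef_two_mul (m : ℕ) : bCoef (2 * m) = m.centralBinom := by
  rw [bCoef, Nat.mul_div_cancel_left m two_pos, centralBinom_eq_two_mul_choose]

theorem convolution_a_b (i : ℕ) (hi : Even i) :
    ∑ j ∈ (Finset.range (i + 1)).filter (fun j => Even j), aCoef j * bCoef (i - j)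
      = (1 / 4) * bCoef (i + 2) := by
  obtain ⟨n, rfl⟩ := hi
  have hconv : (2 : ℝ) * ∑ p ∈ antidiagonal n, (catalan p.1 : ℝ) * p.2.centralBinom
      = (n + 1).centralBinom := by
    exact_mod_cast two_mul_sum_antidiagonal_catalan_mul_centralBinom n
  rw [← two_mul, sum_filter_even_range (fun j => aCoef j * bCoef (2 * n - j)),
    show 2 * n + 2 = 2 * (n + 1) by ring, bCoef_two_mul, ← hconv,
    Finset.Nat.sum_antidiagonal_eq_sum_range_succ (fun a b => (catalan a : ℝ) * b.centralBinom),
    mul_sum, mul_sum]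
  refine sum_congr rfl fun m _ => ?_
  rw [← Nat.mul_sub, aCoef_two_mul, bCoef_two_mul]
  ring
end

section
/- Let (S_k) be the Bernoulli(p) random walk started at 0 and τ_a = min{n ≥ 1 : S_n = a} the first hitting time of level a ∈ ℤ \ {0}. Then for k ≥ |a| with k − a even, P(τ_a = k) = (|a|/k) · C(k, (k+a)/2) · p^{(k+a)/2} · q^{(k-a)/2}. -/
/-!
A ±1 path of length `k` ending at `a` has `j = (k + a) / 2` up-steps, hence probability
`p ^ j * q ^ (k - j)`, so `P(τ_a = k) = N * p ^ j * q ^ (k - j)` where `N` counts the paths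
of length `k` that first hit `a` at time `k`. Splitting off the first step gives the recurrence
`N_{k+1}(a) = N_k(a - 1) + N_k(a + 1)`, where a term is dropped when the first step already hits
`a`. By induction and Pascal's rule, `N_{k+1}(2j + 1 - k) = C(k, j) - C(k, j + 1)`, which is
`a / (k + 1) * C(k + 1, j + 1)`; negative levels follow by reflecting the path.
-/

open MeasureTheory ProbabilityTheory Finset

namespace SimpleRandomWalk

def IsFirstHit (a : ℤ) (k : ℕ) (s : ℕ → ℤ) : Prop :=
  s k = a ∧ ∀ m, 1 ≤ m → m < k → s m ≠ a

lemma isFirstHit_congr {a : ℤ} {k : ℕ} {s s' : ℕ → ℤ} (h : ∀ m ≤ k, s m = s' m) :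
    IsFirstHit a k s ↔ IsFirstHit a k s' := by
  rw [IsFirstHit, IsFirstHit, h k le_rfl]
  exact and_congr_right' <| forall₂_congr fun m _ => forall_congr' fun hm => by rw [h m hm.le]

lemma isFirstHit_neg {a : ℤ} {k : ℕ} {s : ℕ → ℤ} :
    IsFirstHit (-a) k (-s) ↔ IsFirstHit a k s := by
  simp only [IsFirstHit, Pi.neg_apply, ne_eq, neg_inj]

def step (b : Bool) : ℤ := if b then 1 else -1

def walk (f : ℕ → Bool) (m : ℕ) : ℤ := ∑ i ∈ range m, step (f i)

lemma walk_congr {f f' : ℕ → Bool} {m : ℕ} (h : ∀ i < m, f i = f' i) : walk f m = walk f' m :=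
  sum_congr rfl fun i hi => by rw [h i (mem_range.mp hi)]

lemma walk_succ' (f : ℕ → Bool) (m : ℕ) :
    walk f (m + 1) = step (f 0) + walk (fun i => f (i + 1)) m := by
  rw [walk, sum_range_succ', add_comm, walk]

lemma walk_not (f : ℕ → Bool) : walk (fun i => !f i) = -walk f := by
  funext m
  rw [Pi.neg_apply, walk, walk, ← sum_neg_distrib]
  exact sum_congr rfl fun i _ => by cases f i <;> rfl

lemma isFirstHit_walk_succ {k : ℕ} (hk : 1 ≤ k) (a : ℤ) (f : ℕ → Bool) :
    IsFirstHit a (k + 1) (walk f) ↔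
      step (f 0) ≠ a ∧ IsFirstHit (a - step (f 0)) k (walk fun i => f (i + 1)) := by
  simp only [IsFirstHit, walk_succ']
  constructor
  · rintro ⟨hk1, hmid⟩
    refine ⟨?_, by omega, fun m hm1 hmk => ?_⟩
    · simpa [walk] using hmid 1 le_rfl (by omega)
    · have := hmid (m + 1) (by omega) (by omega)
      rw [walk_succ'] at this
      omega
  · rintro ⟨h0, hk1, hmid⟩
    refine ⟨by omega, fun m hm1 hmk => ?_⟩
    obtain ⟨m, rfl⟩ : ∃ m', m = m' + 1 := ⟨m - 1, by omega⟩
    rw [walk_succ']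
    rcases Nat.eq_zero_or_pos m with rfl | hm
    · simpa [walk] using h0
    · have := hmid m hm (by omega)
      omega

lemma isFirstHit_walk_one (a : ℤ) (f : ℕ → Bool) : IsFirstHit a 1 (walk f) ↔ step (f 0) = a := by
  rw [IsFirstHit, and_iff_left fun m hm1 hm => absurd hm (by omega)]
  simp [walk]

def toSeq {k : ℕ} (g : Fin k → Bool) (i : ℕ) : Bool := if h : i < k then g ⟨i, h⟩ else false

lemma toSeq_cons_zero {k : ℕ} (b : Bool) (g : Fin k → Bool) :
    toSeq (Fin.cons b g : Fin (k + 1) → Bool) 0 = b := rfl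

lemma toSeq_cons_succ {k : ℕ} (b : Bool) (g : Fin k → Bool) :
    (fun i => toSeq (Fin.cons b g : Fin (k + 1) → Bool) (i + 1)) = toSeq g := by
  funext i
  by_cases h : i < k
  · simp [toSeq, h]
    rfl
  · simp [toSeq, h]

lemma isFirstHit_walk_toSeq_not {k : ℕ} (g : Fin k → Bool) (a : ℤ) :
    IsFirstHit a k (walk (toSeq fun i => !g i)) ↔ IsFirstHit (-a) k (walk (toSeq g)) := by
  rw [isFirstHit_congr (s' := walk fun i => !toSeq g i) fun m hm => walk_congr fun i hi => by
    simp [toSeq, show i < k by omega], walk_not]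
  simpa using isFirstHit_neg (a := -a) (s := walk (toSeq g))

lemma walk_toSeq {k : ℕ} (g : Fin k → Bool) :
    walk (toSeq g) k = #{i | g i = true} - #{i | ¬g i = true} := by
  rw [walk, ← Fin.sum_univ_eq_sum_range (fun i => step (toSeq g i))]
  simp [toSeq, step, sum_ite, sub_eq_add_neg]

open Classical in
noncomputable def firstHitCount (k : ℕ) (a : ℤ) : ℕ :=
  #{g : Fin k → Bool | IsFirstHit a k (walk (toSeq g))}

lemma firstHitCount_one (a : ℤ) : firstHitCount 1 a = if a = 1 ∨ a = -1 then 1 else 0 := by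
  classical
  simp only [firstHitCount, card_filter, isFirstHit_walk_one]
  rw [← Fintype.sum_equiv (Equiv.funUnique (Fin 1) Bool).symm _ _ fun _ => rfl, Fintype.sum_bool]
  simp only [Equiv.funUnique_symm_apply]
  split_ifs <;> simp_all [toSeq, step] <;> omega

lemma firstHitCount_succ {k : ℕ} (hk : 1 ≤ k) (a : ℤ) :
    firstHitCount (k + 1) a =
      (if a = 1 then 0 else firstHitCount k (a - 1)) +
        (if a = -1 then 0 else firstHitCount k (a + 1)) := by
  classical
  simp only [firstHitCount, card_filter]
  rw [← Fintype.sum_equiv (Fin.consEquiv fun _ => Bool) _ _ fun _ => rfl, Fintype.sum_prod_type,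
    Fintype.sum_bool]
  simp only [Fin.consEquiv, Equiv.coe_fn_mk, isFirstHit_walk_succ hk, toSeq_cons_zero,
    toSeq_cons_succ, step, if_true, Bool.false_eq_true, if_false, sub_neg_eq_add,
    ne_comm (b := a), ite_and]
  congr 1 <;> split_ifs <;> simp_all

lemma firstHitCount_neg (k : ℕ) (a : ℤ) : firstHitCount k (-a) = firstHitCount k a := by
  classical
  refine card_nbij' (fun g i => !g i) (fun g i => !g i) ?_ ?_ ?_ ?_ <;> intro g <;>
    simp [isFirstHit_walk_toSeq_not]

theorem firstHitCount_add_choose (k j : ℕ) (h : k ≤ 2 * j) :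
    firstHitCount (k + 1) (2 * j + 1 - k) + k.choose (j + 1) = k.choose j := by
  induction k generalizing j with
  | zero => rcases j with _ | j <;> simp [firstHitCount_one]; omega
  | succ k ih =>
    obtain ⟨j, rfl⟩ : ∃ j', j = j' + 1 := ⟨j - 1, by omega⟩
    have hup := ih (j + 1) (by omega)
    rw [firstHitCount_succ (by omega), Nat.choose_succ_succ' k (j + 1), Nat.choose_succ_succ' k j]
    push_cast at hup ⊢
    rw [if_neg (show 2 * ((j : ℤ) + 1) + 1 - (k + 1) ≠ -1 by omega),
      show 2 * ((j : ℤ) + 1) + 1 - (k + 1) - 1 = 2 * j + 1 - k by ring,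
      show 2 * ((j : ℤ) + 1) + 1 - (k + 1) + 1 = 2 * (j + 1) + 1 - k by ring]
    split_ifs with ha
    · obtain rfl : k = 2 * j + 1 := by omega
      have := Nat.choose_symm_half j
      omega
    · have hdown := ih j (by omega)
      omega

lemma choose_sub_choose_succ (k j : ℕ) :
    (k.choose j : ℝ) - k.choose (j + 1) = (2 * j + 1 - k) / (k + 1) * (k + 1).choose (j + 1) := by
  rcases le_or_gt j k with hjk | hkj
  · have h1 : ((k + 1) * k.choose j : ℝ) = (k + 1).choose (j + 1) * (j + 1) := by
      exact_mod_cast Nat.add_one_mul_choose_eq k j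
    have h2 : (k.choose (j + 1) * (k + 1) : ℝ) = (k + 1).choose (j + 1) * (k - j) := by
      have := Nat.choose_mul_succ_eq k (j + 1)
      rw [Nat.add_sub_add_right] at this
      rw [← Nat.cast_sub hjk]
      exact_mod_cast this
    field_simp
    linear_combination h1 - h2
  · simp [Nat.choose_eq_zero_of_lt, hkj, Nat.lt_succ_of_lt hkj]

theorem firstHitCount_eq {k j : ℕ} {a : ℤ} (ha : a ≠ 0) (hj : (k : ℤ) + a = 2 * j) :
    (firstHitCount k a : ℝ) = a.natAbs / k * k.choose j := by
  wlog hpos : 0 < a generalizing a j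
  · have hjk : j ≤ k := by omega
    have := this (a := -a) (j := k - j) (neg_ne_zero.mpr ha) (by omega) (by omega)
    rwa [firstHitCount_neg, Int.natAbs_neg, Nat.choose_symm hjk] at this
  rcases k with _ | k
  · simp [firstHitCount, IsFirstHit, walk, ha.symm]
  obtain ⟨j, rfl⟩ : ∃ j', j = j' + 1 := ⟨j - 1, by omega⟩
  have hN := firstHitCount_add_choose k j (by omega)
  rw [show 2 * (j : ℤ) + 1 - k = a by push_cast at hj; omega] at hN
  have hcount : (firstHitCount (k + 1) a : ℝ) = k.choose j - k.choose (j + 1) := by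
    rw [← hN]; push_cast; ring
  have habs : (a.natAbs : ℝ) = 2 * j + 1 - k := by
    have hjR : ((k + 1 : ℕ) : ℝ) + a = 2 * (j + 1 : ℕ) := by exact_mod_cast hj
    rw [Nat.cast_natAbs, Int.cast_abs, abs_of_pos (Int.cast_pos.mpr hpos)]
    push_cast at hjR
    linarith
  rw [hcount, choose_sub_choose_succ, habs]
  push_cast
  ring

section Probability

variable {Ω : Type*} {X : ℕ → Ω → ℤ}

def upSteps (X : ℕ → Ω → ℤ) (k : ℕ) (ω : Ω) : Fin k → Bool := fun i => decide (X i ω = 1)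

lemma walk_toSeq_upSteps {k m : ℕ} (hm : m ≤ k) {ω : Ω} (hω : ∀ i, X i ω = 1 ∨ X i ω = -1) :
    walk (toSeq (upSteps X k ω)) m = ∑ i ∈ range m, X i ω :=
  sum_congr rfl fun i hi => by
    have hik : i < k := (mem_range.mp hi).trans_le hm
    rcases hω i with h | h <;> simp [toSeq, upSteps, hik, step, h]

variable [MeasurableSpace Ω] {μ : Measure Ω}

lemma measurable_upSteps (hmeas : ∀ i, Measurable (X i)) (k : ℕ) : Measurable (upSteps X k) :=
  measurable_pi_lambda _ fun i =>
    (measurable_from_top (f := fun z : ℤ => decide (z = 1))).comp (hmeas i)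

lemma ae_eq_one_or_eq_neg_one [IsProbabilityMeasure μ] {Y : Ω → ℤ} (hY : Measurable Y)
    (h : μ {ω | Y ω = 1} + μ {ω | Y ω = -1} = 1) : ∀ᵐ ω ∂μ, Y ω = 1 ∨ Y ω = -1 := by
  have hY' (z : ℤ) : MeasurableSet {ω | Y ω = z} := hY (measurableSet_singleton z)
  rw [ae_iff_measure_eq (p := fun ω => Y ω = 1 ∨ Y ω = -1)
      ((hY' 1).union (hY' (-1))).nullMeasurableSet, Set.ofPred_or,
    measure_union (Set.disjoint_left.mpr fun ω h1 h2 => by simp_all) (hY' (-1)), h, measure_univ]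

variable [IsProbabilityMeasure μ] {p : ℝ}

lemma measure_upSteps_preimage_singleton (hp : 0 ≤ p) (hmeas : ∀ i, Measurable (X i))
    (hindep : iIndepFun X μ) (hX1 : ∀ i, μ {ω | X i ω = 1} = ENNReal.ofReal p) {k : ℕ}
    (g : Fin k → Bool) :
    μ (upSteps X k ⁻¹' {g}) =
      ENNReal.ofReal p ^ #{i | g i = true} * ENNReal.ofReal (1 - p) ^ #{i | ¬g i = true} := by
  let sets (i : Fin k) : Set ℤ := if g i then {1} else {1}ᶜ
  have hcyl : upSteps X k ⁻¹' {g} = ⋂ i ∈ (univ : Finset (Fin k)), X i ⁻¹' sets i := by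
    ext ω
    simp only [Set.mem_preimage, Set.mem_singleton_iff, funext_iff, upSteps, Set.mem_iInter,
      mem_univ, forall_const, sets]
    exact forall_congr' fun i => by cases g i <;> simp
  have hfactor (i : Fin k) :
      μ (X i ⁻¹' sets i) = if g i then ENNReal.ofReal p else ENNReal.ofReal (1 - p) := by
    by_cases hg : g i
    · simp only [sets, hg, if_true]
      exact hX1 i
    · simp only [sets, hg, Bool.false_eq_true, if_false, Set.preimage_compl]
      rw [prob_compl_eq_one_sub (hmeas i (measurableSet_singleton 1)), ENNReal.ofReal_sub 1 hp,
        ENNReal.ofReal_one]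
      exact congrArg _ (hX1 i)
  rw [hcyl, (hindep.precomp Fin.val_injective).measure_inter_preimage_eq_mul _
    fun i _ => by unfold sets; split_ifs <;> measurability]
  simp_rw [hfactor]
  rw [prod_ite, prod_const, prod_const]

lemma measure_isFirstHit_walk_upSteps (hp : 0 ≤ p) (hmeas : ∀ i, Measurable (X i))
    (hindep : iIndepFun X μ) (hX1 : ∀ i, μ {ω | X i ω = 1} = ENNReal.ofReal p) {k j : ℕ}
    {a : ℤ} (hj : (k : ℤ) + a = 2 * j) :
    μ {ω | IsFirstHit a k (walk (toSeq (upSteps X k ω)))} =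
      firstHitCount k a * (ENNReal.ofReal p ^ j * ENNReal.ofReal (1 - p) ^ (k - j)) := by
  classical
  have hG : {ω | IsFirstHit a k (walk (toSeq (upSteps X k ω)))} =
      upSteps X k ⁻¹' ↑({g | IsFirstHit a k (walk (toSeq g))} : Finset (Fin k → Bool)) := by
    ext; simp
  rw [hG, ← Measure.map_apply (measurable_upSteps hmeas k) (Finset.measurableSet _),
    ← sum_measure_singleton, firstHitCount, ← nsmul_eq_mul, ← sum_const]
  refine sum_congr rfl fun g hg => ?_
  rw [Measure.map_apply (measurable_upSteps hmeas k) (measurableSet_singleton g),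
    measure_upSteps_preimage_singleton hp hmeas hindep hX1]
  have hwalk := walk_toSeq g
  have hcard := card_filter_add_card_filter_not (s := univ) (fun i => g i = true)
  rw [(mem_filter.mp hg).2.1] at hwalk
  rw [card_univ, Fintype.card_fin] at hcard
  obtain ⟨hup, hdown⟩ : #{i | g i = true} = j ∧ #{i | ¬g i = true} = k - j := by omega
  rw [hup, hdown]

end Probability

end SimpleRandomWalk

open SimpleRandomWalk

theorem law_tau_a {Ω : Type*} [MeasurableSpace Ω] (μ : Measure Ω)
    [IsProbabilityMeasure μ]
    (p : ℝ) (hp0 : 0 < p) (hp1 : p < 1)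
    (X : ℕ → Ω → ℤ) (hmeas : ∀ i, Measurable (X i))
    (hindep : iIndepFun X μ)
    (hX1 : ∀ i, μ {ω | X i ω = 1} = ENNReal.ofReal p)
    (hX2 : ∀ i, μ {ω | X i ω = -1} = ENNReal.ofReal (1 - p))
    (S : ℕ → Ω → ℤ) (hS : ∀ n ω, S n ω = ∑ i ∈ Finset.range n, X i ω)
    (a : ℤ) (ha : a ≠ 0) (k : ℕ) (hk : a.natAbs ≤ k) (heven : Even ((k : ℤ) - a))
    :
    (μ {ω | S k ω = a ∧ ∀ m, 1 ≤ m → m < k → S m ω ≠ a}).toReal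
      = ((a.natAbs : ℝ) / k) * (k.choose (((k : ℤ) + a) / 2).toNat : ℝ)
          * p ^ (((k : ℤ) + a) / 2).toNat * (1 - p) ^ (((k : ℤ) - a) / 2).toNat := by
  obtain ⟨hj, hkj⟩ : (k : ℤ) + a = 2 * (((k : ℤ) + a) / 2).toNat ∧
      (((k : ℤ) - a) / 2).toNat = k - (((k : ℤ) + a) / 2).toNat := by
    obtain ⟨c, hc⟩ := heven
    omega
  have hpm : ∀ᵐ ω ∂μ, ∀ i, X i ω = 1 ∨ X i ω = -1 := ae_all_iff.mpr fun i =>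
    ae_eq_one_or_eq_neg_one (hmeas i) <| by
      rw [hX1, hX2, ← ENNReal.ofReal_add hp0.le (by linarith), add_sub_cancel, ENNReal.ofReal_one]
  have hevent : {ω | IsFirstHit a k fun m => S m ω} =ᵐ[μ]
      {ω | IsFirstHit a k (walk (toSeq (upSteps X k ω)))} := by
    filter_upwards [hpm] with ω hω
    change (IsFirstHit a k fun m => S m ω) = IsFirstHit a k (walk (toSeq (upSteps X k ω)))
    exact propext <| isFirstHit_congr fun m hm => by rw [walk_toSeq_upSteps hm hω]; exact hS m ω
  rw [show {ω | S k ω = a ∧ ∀ m, 1 ≤ m → m < k → S m ω ≠ a} =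
      {ω | IsFirstHit a k fun m => S m ω} from rfl, measure_congr hevent,
    measure_isFirstHit_walk_upSteps hp0.le hmeas hindep hX1 hj, hkj, ENNReal.toReal_mul,
    ENNReal.toReal_mul, ENNReal.toReal_natCast, ENNReal.toReal_pow, ENNReal.toReal_pow,
    ENNReal.toReal_ofReal hp0.le, ENNReal.toReal_ofReal (by linarith), firstHitCount_eq ha hj]
  ring
end

section
/- For the Bernoulli(p) random walk, with τ_0 the first return to 0, for every even j ≥ 2: P(τ_0 = j, S_1 > 0) = P(τ_0 = j, S_1 < 0) = (1/2)·P(τ_0 = j) = 2·a_{j−2}·(pq)^{j/2}, where a_i = (1/(i+2))·C(i, i/2). -/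
/-!
Up to a null set the first `2n` steps form a `±1` vector, and each such vector with as many
`+1`s as `-1`s has probability `(pq)^n`; so each event has probability (number of its paths)
times `(pq)^n`. Negating a path swaps the first returns that start upwards and downwards. A path
that starts upwards and first returns to `0` at time `2n` stays strictly positive in between, so
it is a nested Dyck word `U x D` with `x` of semilength `n - 1`: there are `catalan (n - 1)` of
them, and `catalan (n - 1) = C(2n-2, n-1) / n = 2 a_{2n-2}`.
-/

open MeasureTheory ProbabilityTheory Finset

namespace DyckStep

def toInt : DyckStep → ℤ
  | U => 1
  | D => -1

def ofInt (z : ℤ) : DyckStep := if z = 1 then U else D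

lemma toInt_injective : Function.Injective toInt := by
  intro a b
  cases a <;> cases b <;> simp [toInt]

lemma toInt_ofInt {z : ℤ} (hz : z = 1 ∨ z = -1) : toInt (ofInt z) = z := by
  rcases hz with rfl | rfl <;> simp [ofInt, toInt]

lemma toInt_eq_one_or_neg_one (s : DyckStep) : toInt s = 1 ∨ toInt s = -1 := by
  cases s <;> simp [toInt]

lemma sum_map_toInt (l : List DyckStep) : (l.map toInt).sum = l.count U - l.count D := by
  induction l with
  | nil => simp
  | cons s l ih => cases s <;> simp [toInt, ih] <;> ring

end DyckStep

namespace DyckWord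

open DyckStep

def ofNestedList (l : List DyckStep) (hbal : l.count U = l.count D)
    (hpos : ∀ i, 0 < i → i < l.length → (l.take i).count D < (l.take i).count U) :
    DyckWord where
  toList := l
  count_U_eq_count_D := hbal
  count_D_le_count_U i := by
    rcases Nat.eq_zero_or_pos i with rfl | hi
    · simp
    rcases lt_or_ge i l.length with hil | hil
    · exact (hpos i hi hil).le
    · rw [List.take_of_length_le hil, hbal]

lemma isNested_ofNestedList {l : List DyckStep} (hl : l ≠ []) (hbal hpos) :
    (ofNestedList l hbal hpos).IsNested :=
  ⟨by rwa [← toList_ne_nil], hpos⟩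

lemma nest_injective : Function.Injective nest := by
  intro p q h
  rw [← denest_nest p, ← denest_nest q]
  congr

lemma length_nest (p : DyckWord) : p.nest.toList.length = 2 * (p.semilength + 1) := by
  rw [← two_mul_semilength_eq_length, semilength_nest]

end DyckWord

section Excursions

variable {j : ℕ}

def partialSum (ε : Fin j → ℤ) (m : ℕ) : ℤ := ((List.ofFn ε).take m).sum

def signVectors (j : ℕ) : Finset (Fin j → ℤ) := Fintype.piFinset fun _ => {1, -1}

def IsFirstReturn (ε : Fin j → ℤ) : Prop :=
  partialSum ε j = 0 ∧ ∀ m, 1 ≤ m → m < j → partialSum ε m ≠ 0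

def IsPositiveExcursion (ε : Fin j → ℤ) : Prop :=
  partialSum ε j = 0 ∧ ∀ m, 0 < m → m < j → 0 < partialSum ε m

lemma mem_signVectors {ε : Fin j → ℤ} : ε ∈ signVectors j ↔ ∀ i, ε i = 1 ∨ ε i = -1 := by
  simp [signVectors]

lemma partialSum_self (ε : Fin j → ℤ) : partialSum ε j = ∑ i, ε i := by
  simp [partialSum, List.sum_take_ofFn]

lemma partialSum_succ (ε : Fin j → ℤ) {m : ℕ} (hm : m < j) :
    partialSum ε (m + 1) = partialSum ε m + ε ⟨m, hm⟩ := by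
  rw [partialSum, partialSum, List.sum_take_succ _ _ (by simpa using hm), List.getElem_ofFn]

lemma partialSum_neg (ε : Fin j → ℤ) (m : ℕ) : partialSum (-ε) m = -partialSum ε m := by
  simp [partialSum, List.sum_take_ofFn]

lemma neg_mem_signVectors {ε : Fin j → ℤ} : -ε ∈ signVectors j ↔ ε ∈ signVectors j := by
  simp only [mem_signVectors, Pi.neg_apply, neg_eq_iff_eq_neg, neg_neg]
  exact forall_congr' fun _ => or_comm

lemma IsFirstReturn.sum_eq_zero {ε : Fin j → ℤ} (h : IsFirstReturn ε) : ∑ i, ε i = 0 :=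
  partialSum_self ε ▸ h.1

lemma isFirstReturn_neg {ε : Fin j → ℤ} : IsFirstReturn (-ε) ↔ IsFirstReturn ε := by
  simp [IsFirstReturn, partialSum_neg]

lemma partialSum_pos_of_ne_zero {ε : Fin j → ℤ} (hε : ε ∈ signVectors j)
    (h1 : 0 < partialSum ε 1) (hne : ∀ m, 1 ≤ m → m < j → partialSum ε m ≠ 0) {m : ℕ}
    (hm : 0 < m) (hmj : m < j) : 0 < partialSum ε m := by
  induction m, hm using Nat.le_induction with
  | base => exact h1
  | succ m hm ih =>
    have hsucc := partialSum_succ ε (m := m) (by omega)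
    have hne' := hne (m + 1) (by omega) hmj
    have ih' := ih (by omega)
    rcases mem_signVectors.1 hε ⟨m, by omega⟩ with h | h <;> omega

lemma isFirstReturn_and_pos_iff {ε : Fin j → ℤ} (hj : 1 < j) (hε : ε ∈ signVectors j) :
    IsFirstReturn ε ∧ 0 < partialSum ε 1 ↔ IsPositiveExcursion ε :=
  ⟨fun ⟨h, h1⟩ => ⟨h.1, fun _ hm hmj => partialSum_pos_of_ne_zero hε h1 h.2 hm hmj⟩,
    fun h => ⟨⟨h.1, fun m hm hmj => (h.2 m hm hmj).ne'⟩, h.2 1 one_pos hj⟩⟩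

open Classical in
lemma card_firstReturn_neg :
    #{ε ∈ signVectors j | IsFirstReturn ε ∧ partialSum ε 1 < 0} =
      #{ε ∈ signVectors j | IsFirstReturn ε ∧ 0 < partialSum ε 1} := by
  refine card_nbij' Neg.neg Neg.neg ?_ ?_ (fun ε _ => neg_neg ε) (fun ε _ => neg_neg ε) <;>
    intro ε <;> simp [neg_mem_signVectors, isFirstReturn_neg, partialSum_neg]

open Classical in
lemma card_firstReturn (hj : 1 < j) :
    #{ε ∈ signVectors j | IsFirstReturn ε} =
      #{ε ∈ signVectors j | IsFirstReturn ε ∧ 0 < partialSum ε 1} +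
        #{ε ∈ signVectors j | IsFirstReturn ε ∧ partialSum ε 1 < 0} := by
  rw [← card_union_of_disjoint, ← filter_or]
  · refine congrArg card (filter_congr fun ε _ => ?_)
    have h1 : IsFirstReturn ε → partialSum ε 1 ≠ 0 := fun h => h.2 1 le_rfl hj
    constructor
    · intro h
      rcases (h1 h).lt_or_gt with hlt | hgt
      exacts [Or.inr ⟨h, hlt⟩, Or.inl ⟨h, hgt⟩]
    · rintro (h | h) <;> exact h.1
  · exact disjoint_filter.2 fun ε _ h1 h2 => h1.2.not_gt h2.2

open DyckStep

lemma partialSum_eq_count {ε : Fin j → ℤ} {l : List DyckStep} (h : List.ofFn ε = l.map toInt)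
    (m : ℕ) : partialSum ε m = (l.take m).count U - (l.take m).count D := by
  rw [partialSum, h, ← List.map_take, sum_map_toInt]

lemma ofFn_toInt_getD {l : List DyckStep} (hl : l.length = j) :
    List.ofFn (fun i : Fin j => toInt (l.getD i U)) = l.map toInt := by
  subst hl
  refine List.ext_getElem (by simp) fun i h _ => ?_
  simp

end Excursions

namespace DyckWord

open DyckStep

-- The default `U` of `getD` is never read: below, `j` is the length of `q.nest`.
def nestSteps (q : DyckWord) (j : ℕ) (i : Fin j) : ℤ := toInt (q.nest.toList.getD i U)

variable {q : DyckWord} {n : ℕ}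

lemma ofFn_nestSteps (hq : q.semilength = n) :
    List.ofFn (q.nestSteps (2 * (n + 1))) = q.nest.toList.map toInt :=
  ofFn_toInt_getD (by rw [length_nest, hq])

lemma nestSteps_mem_signVectors (j : ℕ) : q.nestSteps j ∈ signVectors j :=
  mem_signVectors.2 fun _ => toInt_eq_one_or_neg_one _

lemma isPositiveExcursion_nestSteps (hq : q.semilength = n) :
    IsPositiveExcursion (q.nestSteps (2 * (n + 1))) := by
  have hlen : q.nest.toList.length = 2 * (n + 1) := by rw [length_nest, hq]
  have hsum := partialSum_eq_count (ofFn_nestSteps hq)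
  refine ⟨?_, fun m hm hmj => ?_⟩
  · rw [hsum, List.take_of_length_le hlen.le, q.nest.count_U_eq_count_D, sub_self]
  · rw [hsum, sub_pos, Nat.cast_lt]
    exact IsNested.nest.2 hm (hlen ▸ hmj)

lemma nestSteps_injective (hq : q.semilength = n) {q' : DyckWord} (hq' : q'.semilength = n)
    (h : q.nestSteps (2 * (n + 1)) = q'.nestSteps (2 * (n + 1))) : q = q' := by
  have h' := congrArg List.ofFn h
  rw [ofFn_nestSteps hq, ofFn_nestSteps hq',
    (List.map_injective_iff.2 toInt_injective).eq_iff] at h'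
  exact nest_injective (DyckWord.ext h')

lemma exists_nestSteps_eq {ε : Fin (2 * (n + 1)) → ℤ} (hsign : ε ∈ signVectors (2 * (n + 1)))
    (hε : IsPositiveExcursion ε) : ∃ q : DyckWord, q.semilength = n ∧ q.nestSteps _ = ε := by
  set l := (List.ofFn ε).map ofInt
  have hl : List.ofFn ε = l.map toInt := by
    rw [List.map_map, eq_comm, List.map_congr_left fun z hz => ?_, List.map_id]
    obtain ⟨i, rfl⟩ := List.mem_ofFn.1 hz
    exact toInt_ofInt (mem_signVectors.1 hsign i)
  have hlen : l.length = 2 * (n + 1) := by simp only [l, List.length_map, List.length_ofFn]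
  have hbal : l.count U = l.count D := by
    have := partialSum_eq_count hl (2 * (n + 1))
    rw [hε.1, List.take_of_length_le hlen.le] at this
    omega
  have hpos : ∀ i, 0 < i → i < l.length → (l.take i).count D < (l.take i).count U := by
    intro i hi hil
    have := partialSum_eq_count hl i
    have := hε.2 i hi (hlen ▸ hil)
    omega
  have hw := isNested_ofNestedList (List.ne_nil_of_length_pos (by omega)) hbal hpos
  have hq : ((ofNestedList l hbal hpos).denest hw).nest = ofNestedList l hbal hpos :=
    nest_denest _ hw
  have hsemi : ((ofNestedList l hbal hpos).denest hw).semilength = n := by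
    have := ((ofNestedList l hbal hpos).denest hw).nest.two_mul_semilength_eq_length
    rw [semilength_nest, hq] at this
    change _ = l.length at this
    omega
  refine ⟨_, hsemi, List.ofFn_injective ?_⟩
  rw [ofFn_nestSteps hsemi, hl, hq]
  rfl

end DyckWord

open Classical in
theorem card_positiveExcursion (n : ℕ) :
    #{ε ∈ signVectors (2 * (n + 1)) | IsPositiveExcursion ε} = catalan n := by
  rw [← DyckWord.card_dyckWord_semilength_eq_catalan, ← card_univ]
  symm
  refine card_bij (fun q _ => q.1.nestSteps (2 * (n + 1))) (fun q _ => ?_)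
    (fun q _ q' _ h => Subtype.ext (DyckWord.nestSteps_injective q.2 q'.2 h)) fun ε hε => ?_
  · exact mem_filter.2 ⟨DyckWord.nestSteps_mem_signVectors _,
      DyckWord.isPositiveExcursion_nestSteps q.2⟩
  · obtain ⟨q, hq, rfl⟩ := DyckWord.exists_nestSteps_eq (mem_filter.1 hε).1 (mem_filter.1 hε).2
    exact ⟨⟨q, hq⟩, mem_univ _, rfl⟩

lemma catalan_eq_two_mul_aCoef (k : ℕ) : (catalan k : ℝ) = 2 * aCoef (2 * k) := by
  rw [aCoef, Nat.mul_div_cancel_left k two_pos, ← Nat.centralBinom_eq_two_mul_choose,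
    ← succ_mul_catalan_eq_centralBinom]
  push_cast
  field_simp

lemma prod_ite_eq_pow_of_sum_eq_zero {M : Type*} [CommMonoid M] (a b : M) {n : ℕ}
    {ε : Fin (2 * n) → ℤ} (hε : ε ∈ signVectors (2 * n)) (hsum : ∑ i, ε i = 0) :
    ∏ i, (if ε i = 1 then a else b) = (a * b) ^ n := by
  have hcard :=
    card_filter_add_card_filter_not (s := (univ : Finset (Fin (2 * n)))) (fun i => ε i = 1)
  have hdiff : ∑ i, ε i = (#{i | ε i = 1} : ℤ) - #{i | ¬ε i = 1} := by
    rw [← sum_filter_add_sum_filter_not univ (fun i => ε i = 1),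
      sum_congr rfl fun i hi => (mem_filter.1 hi).2,
      sum_congr rfl fun i hi => (mem_signVectors.1 hε i).resolve_left (mem_filter.1 hi).2]
    simp [sub_eq_add_neg]
  rw [card_univ, Fintype.card_fin] at hcard
  have h1 : #{i | ε i = 1} = n := by omega
  have h2 : #{i | ¬ε i = 1} = n := by omega
  rw [prod_ite, prod_const, prod_const, h1, h2, mul_pow]

section RandomWalk

variable {Ω : Type*} {X : ℕ → Ω → ℤ}

def steps (X : ℕ → Ω → ℤ) (j : ℕ) (ω : Ω) (i : Fin j) : ℤ := X i ω

lemma partialSum_steps {S : ℕ → Ω → ℤ} (hS : ∀ n ω, S n ω = ∑ i ∈ range n, X i ω)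
    {j m : ℕ} (hm : m ≤ j) (ω : Ω) : partialSum (steps X j ω) m = S m ω := by
  simp only [partialSum, List.sum_take_ofFn, hS, sum_filter, steps]
  rw [Fin.sum_univ_eq_sum_range (fun i => if i < m then X i ω else 0), ← sum_filter]
  congr 1
  ext i
  simp only [mem_filter, mem_range]
  omega

lemma isFirstReturn_steps_iff {S : ℕ → Ω → ℤ} (hS : ∀ n ω, S n ω = ∑ i ∈ range n, X i ω)
    {j : ℕ} (ω : Ω) :
    IsFirstReturn (steps X j ω) ↔ S j ω = 0 ∧ ∀ m, 1 ≤ m → m < j → S m ω ≠ 0 := by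
  refine and_congr (by rw [partialSum_steps hS le_rfl]) (forall_congr' fun m => ?_)
  exact ⟨fun h hm hmj => partialSum_steps hS hmj.le ω ▸ h hm hmj,
    fun h hm hmj => (partialSum_steps hS hmj.le ω).symm ▸ h hm hmj⟩

variable [MeasurableSpace Ω] {μ : Measure Ω}

lemma measure_steps_preimage_singleton (hindep : iIndepFun X μ) {j : ℕ} (ε : Fin j → ℤ) :
    μ (steps X j ⁻¹' {ε}) = ∏ i : Fin j, μ (X i ⁻¹' {ε i}) := by
  have := (hindep.precomp Fin.val_injective).measure_inter_preimage_eq_mul univ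
    (sets := fun i : Fin j => {ε i}) fun _ _ => measurableSet_singleton _
  convert this using 2
  ext ω
  simp [steps, funext_iff]

lemma ae_steps_mem_signVectors [IsProbabilityMeasure μ] (hmeas : ∀ i, Measurable (X i))
    {p : ℝ} (hp0 : 0 ≤ p) (hp1 : p ≤ 1) (hX1 : ∀ i, μ {ω | X i ω = 1} = ENNReal.ofReal p)
    (hX2 : ∀ i, μ {ω | X i ω = -1} = ENNReal.ofReal (1 - p)) (j : ℕ) :
    ∀ᵐ ω ∂μ, steps X j ω ∈ signVectors j := by
  simp only [mem_signVectors, steps, ae_all_iff]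
  intro i
  have hmeas1 : MeasurableSet {ω | X i ω = 1} := hmeas i (measurableSet_singleton 1)
  have hmeas2 : MeasurableSet {ω | X i ω = -1} := hmeas i (measurableSet_singleton (-1))
  have hdisj : Disjoint {ω | X i ω = 1} {ω | X i ω = -1} :=
    Set.disjoint_left.2 fun ω h1 h2 => by simp_all
  refine ae_iff.2 ((prob_compl_eq_zero_iff (hmeas1.union hmeas2)).2 ?_)
  rw [measure_union hdisj hmeas2, hX1, hX2, ← ENNReal.ofReal_add hp0 (sub_nonneg.2 hp1)]
  simp

lemma measure_steps_of_sum_eq_zero [IsProbabilityMeasure μ] (hmeas : ∀ i, Measurable (X i))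
    (hindep : iIndepFun X μ) {p : ℝ} (hp0 : 0 ≤ p) (hp1 : p ≤ 1)
    (hX1 : ∀ i, μ {ω | X i ω = 1} = ENNReal.ofReal p)
    (hX2 : ∀ i, μ {ω | X i ω = -1} = ENNReal.ofReal (1 - p)) {n : ℕ}
    (P : (Fin (2 * n) → ℤ) → Prop) [DecidablePred P]
    (hP : ∀ ε ∈ signVectors (2 * n), P ε → ∑ i, ε i = 0) :
    μ {ω | P (steps X (2 * n) ω)} =
      #{ε ∈ signVectors (2 * n) | P ε} * ENNReal.ofReal (p * (1 - p)) ^ n := by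
  have hsteps : Measurable (steps X (2 * n)) := measurable_pi_lambda _ fun i => hmeas i
  calc μ {ω | P (steps X (2 * n) ω)}
      = μ (steps X (2 * n) ⁻¹' ↑{ε ∈ signVectors (2 * n) | P ε}) := by
        refine measure_congr ?_
        filter_upwards [ae_steps_mem_signVectors hmeas hp0 hp1 hX1 hX2 (2 * n)] with ω hω
        change P _ = (_ ∈ (_ : Finset _))
        simp [hω]
    _ = ∑ ε ∈ signVectors (2 * n) with P ε, μ (steps X (2 * n) ⁻¹' {ε}) :=
        (sum_measure_preimage_singleton _ fun ε _ => hsteps (measurableSet_singleton ε)).symm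
    _ = ∑ ε ∈ signVectors (2 * n) with P ε, ENNReal.ofReal (p * (1 - p)) ^ n := by
        refine sum_congr rfl fun ε hε => ?_
        obtain ⟨hsign, hPε⟩ := mem_filter.1 hε
        have hfactor (i : Fin (2 * n)) : μ (X i ⁻¹' {ε i}) =
            if ε i = 1 then ENNReal.ofReal p else ENNReal.ofReal (1 - p) := by
          rcases mem_signVectors.1 hsign i with h | h
          · rw [h, if_pos rfl]
            exact hX1 i
          · rw [h, if_neg (by norm_num)]
            exact hX2 i
        rw [measure_steps_preimage_singleton hindep, prod_congr rfl fun i _ => hfactor i,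
          prod_ite_eq_pow_of_sum_eq_zero _ _ hsign (hP ε hsign hPε), ENNReal.ofReal_mul hp0]
    _ = _ := by rw [sum_const, nsmul_eq_mul]

end RandomWalk

theorem law_tau0_S1 {Ω : Type*} [MeasurableSpace Ω] (μ : Measure Ω)
    [IsProbabilityMeasure μ]
    (p : ℝ) (hp0 : 0 < p) (hp1 : p < 1)
    (X : ℕ → Ω → ℤ) (hmeas : ∀ i, Measurable (X i))
    (hindep : iIndepFun X μ)
    (hX1 : ∀ i, μ {ω | X i ω = 1} = ENNReal.ofReal p)
    (hX2 : ∀ i, μ {ω | X i ω = -1} = ENNReal.ofReal (1 - p))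
    (S : ℕ → Ω → ℤ) (hS : ∀ n ω, S n ω = ∑ i ∈ Finset.range n, X i ω)
    (j : ℕ) (hj : Even j) (hj2 : 2 ≤ j)
    :
    (μ {ω | (S j ω = 0 ∧ ∀ m, 1 ≤ m → m < j → S m ω ≠ 0) ∧ 0 < S 1 ω}).toReal
      = (μ {ω | (S j ω = 0 ∧ ∀ m, 1 ≤ m → m < j → S m ω ≠ 0) ∧ S 1 ω < 0}).toReal ∧
    (μ {ω | (S j ω = 0 ∧ ∀ m, 1 ≤ m → m < j → S m ω ≠ 0) ∧ S 1 ω < 0}).toReal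
      = (1 / 2) * (μ {ω | S j ω = 0 ∧ ∀ m, 1 ≤ m → m < j → S m ω ≠ 0}).toReal ∧
    (1 / 2) * (μ {ω | S j ω = 0 ∧ ∀ m, 1 ≤ m → m < j → S m ω ≠ 0}).toReal
      = 2 * aCoef (j - 2) * (p * (1 - p)) ^ (j / 2) := by
  classical
  obtain ⟨k, rfl⟩ : ∃ k, j = 2 * (k + 1) := by
    obtain ⟨r, hr⟩ := hj
    exact ⟨r - 1, by omega⟩
  have hprob (P : (Fin (2 * (k + 1)) → ℤ) → Prop) [DecidablePred P]
      (hP : ∀ ε ∈ signVectors (2 * (k + 1)), P ε → ∑ i, ε i = 0) :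
      (μ {ω | P (steps X (2 * (k + 1)) ω)}).toReal =
        #{ε ∈ signVectors (2 * (k + 1)) | P ε} * (p * (1 - p)) ^ (k + 1) := by
    rw [measure_steps_of_sum_eq_zero hmeas hindep hp0.le hp1.le hX1 hX2 P hP]
    simp [ENNReal.toReal_ofReal (mul_nonneg hp0.le (sub_nonneg.2 hp1.le))]
  simp only [← isFirstReturn_steps_iff hS, ← partialSum_steps hS (j := 2 * (k + 1)) (m := 1)
    (by omega)]
  have hpos := hprob (fun ε => IsFirstReturn ε ∧ 0 < partialSum ε 1) fun _ _ h => h.1.sum_eq_zero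
  have hneg := hprob (fun ε => IsFirstReturn ε ∧ partialSum ε 1 < 0) fun _ _ h => h.1.sum_eq_zero
  have htot := hprob IsFirstReturn fun _ _ h => h.sum_eq_zero
  beta_reduce at hpos hneg
  rw [hpos, hneg, htot, card_firstReturn (by omega), card_firstReturn_neg,
    filter_congr fun ε hε => isFirstReturn_and_pos_iff (by omega) hε, card_positiveExcursion,
    show 2 * (k + 1) - 2 = 2 * k by omega, show 2 * (k + 1) / 2 = k + 1 by omega,
    ← catalan_eq_two_mul_aCoef]
  push_cast
  refine ⟨rfl, by ring, by ring⟩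
end

section
/- For the Bernoulli(p) random walk and odd n ≥ 1, the first-hitting-time probability P(τ_1 = n) = P(S_1 ≤ 0, ..., S_{n−1} ≤ 0, S_n > 0) equals 2·a_{n−1}·p^{(n+1)/2}·q^{(n−1)/2}, where a_i = (1/(i+2))·C(i, i/2); it is 0 for even n. -/
/-!
On the almost sure event that every step is `±1`, the event `{τ₁ = n}` is determined by the
signs of the first `n` steps, and by independence a sign pattern with `k` up-steps has
probability `p ^ k * q ^ (n - k)`. A pattern is a first passage to `1` exactly when it is a Dyck
word (read upside down) followed by one up-step. Hence `n = 2m + 1`, each such pattern has `m + 1`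
up-steps, and there are `catalan m = C(2m, m) / (m + 1) = 2 a_{2m}` of them.
-/

open MeasureTheory ProbabilityTheory Finset

lemma two_mul_aCoef_two_mul (m : ℕ) : 2 * aCoef (2 * m) = catalan m := by
  have h := succ_mul_catalan_eq_centralBinom m
  rw [Nat.centralBinom_eq_two_mul_choose] at h
  rw [aCoef, Nat.mul_div_cancel_left m two_pos, ← h]
  push_cast
  field_simp

lemma List.prod_map_ite_bool {M : Type*} [CommMonoid M] (a b : M) (l : List Bool) :
    (l.map fun x => if x then a else b).prod = a ^ l.count true * b ^ l.count false := by
  induction l with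
  | nil => simp
  | cons x l ih =>
    cases x <;> simp [ih, pow_succ, mul_assoc, mul_comm, mul_left_comm]

namespace SimpleWalk

open List DyckStep

def height (l : List Bool) : ℤ := l.count true - l.count false

@[simp] lemma height_nil : height [] = 0 := rfl

@[simp] lemma height_append (l₁ l₂ : List Bool) : height (l₁ ++ l₂) = height l₁ + height l₂ := by
  simp only [height, count_append]
  push_cast
  ring

@[simp] lemma height_singleton (b : Bool) : height [b] = if b then 1 else -1 := by
  cases b <;> rfl

lemma height_take_succ {l : List Bool} {k : ℕ} (hk : k < l.length) :
    height (l.take (k + 1)) = height (l.take k) + height [l[k]] := by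
  rw [take_add_one, getElem?_eq_getElem hk, Option.toList_some, height_append]

def IsFirstPassage (l : List Bool) : Prop :=
  height l = 1 ∧ ∀ k < l.length, height (l.take k) ≠ 1

instance : DecidablePred IsFirstPassage := fun l => by unfold IsFirstPassage; infer_instance

lemma IsFirstPassage.count_true_eq_count_false_add_one {l : List Bool} (h : IsFirstPassage l) :
    l.count true = l.count false + 1 := by
  have := h.1
  simp only [height] at this
  omega

lemma IsFirstPassage.count_eq {l : List Bool} (h : IsFirstPassage l) {m : ℕ}
    (hl : l.length = 2 * m + 1) : l.count true = m + 1 ∧ l.count false = m := by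
  have := count_true_add_count_false l
  have := h.count_true_eq_count_false_add_one
  omega

lemma IsFirstPassage.odd_length {l : List Bool} (h : IsFirstPassage l) : Odd l.length := by
  rw [← count_true_add_count_false, h.count_true_eq_count_false_add_one]
  exact ⟨l.count false, by ring⟩

/-- A walk with steps `±1` cannot jump over the level `1`. -/
lemma IsFirstPassage.height_take_nonpos {l : List Bool} (h : IsFirstPassage l) :
    ∀ k < l.length, height (l.take k) ≤ 0 := by
  intro k
  induction k with
  | zero => simp
  | succ k ih =>
    intro hk
    have hne := h.2 (k + 1) hk
    rw [height_take_succ (by omega)] at hne ⊢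
    have := ih (by omega)
    cases hb : l[k] <;>
      simp only [hb, height_singleton, Bool.false_eq_true, ↓reduceIte] at hne ⊢ <;> omega

/-- A `+1` step of the walk is a `D` step, so the walk is the negative of the Dyck path height. -/
def dyckStepEquivBool : DyckStep ≃ Bool where
  toFun s := s = D
  invFun b := if b then D else U
  left_inv s := by cases s <;> rfl
  right_inv b := by cases b <;> rfl

lemma height_map_dyckStepEquivBool (w : List DyckStep) :
    height (w.map dyckStepEquivBool) = w.count D - w.count U := by
  have hD := count_map_of_injective w _ dyckStepEquivBool.injective D
  have hU := count_map_of_injective w _ dyckStepEquivBool.injective U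
  exact congrArg₂ (fun a b : ℕ => (a : ℤ) - b) hD hU

lemma isFirstPassage_dyckWord_append (w : DyckWord) :
    IsFirstPassage (w.toList.map dyckStepEquivBool ++ [true]) := by
  refine ⟨by simp [height_map_dyckStepEquivBool, w.count_U_eq_count_D], fun k hk => ?_⟩
  rw [take_append_of_le_length (by simpa using hk), ← map_take, height_map_dyckStepEquivBool]
  have := w.count_D_le_count_U k
  omega

lemma IsFirstPassage.exists_dyckWord {l : List Bool} (h : IsFirstPassage l) :
    ∃ w : DyckWord, l = w.toList.map dyckStepEquivBool ++ [true] := by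
  obtain ⟨l', b, rfl⟩ : ∃ l' b, l = l' ++ [b] := by
    rcases eq_nil_or_concat l with rfl | h'
    · exact absurd h.1 (by simp)
    · simpa [eq_comm] using h'
  have hpre : ∀ i, height (l'.take i) ≤ 0 := by
    intro i
    rcases le_or_gt i l'.length with hi | hi
    · simpa [take_append_of_le_length hi] using h.height_take_nonpos i
        (by simp only [length_append, length_singleton]; omega)
    · simpa [take_of_length_le hi.le] using h.height_take_nonpos l'.length (by simp)
  obtain ⟨rfl, hl'⟩ : b = true ∧ height l' = 0 := by
    have hl' := hpre l'.length
    rw [take_length] at hl'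
    have hb := h.1
    cases b <;> simp only [height_append, height_singleton, Bool.false_eq_true, ↓reduceIte] at hb
    · omega
    · exact ⟨rfl, by omega⟩
  have hdyck : ∀ i, height (l'.take i) =
      ((l'.map dyckStepEquivBool.symm).take i).count D -
        ((l'.map dyckStepEquivBool.symm).take i).count U := fun i => by
    rw [← height_map_dyckStepEquivBool, ← map_take, List.map_map, Equiv.self_comp_symm, map_id]
  refine ⟨⟨l'.map dyckStepEquivBool.symm, ?_, fun i => ?_⟩, ?_⟩
  · have := hdyck l'.length
    rw [take_length, take_of_length_le (by simp)] at this
    omega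
  · have := hdyck i
    have := hpre i
    omega
  · rw [List.map_map, Equiv.self_comp_symm, map_id]

noncomputable def dyckWordEquivFirstPassage (m : ℕ) :
    {w : DyckWord // w.semilength = m} ≃
      {l : List Bool // l.length = 2 * m + 1 ∧ IsFirstPassage l} :=
  Equiv.ofBijective
    (fun w => ⟨w.1.toList.map dyckStepEquivBool ++ [true],
      by simp [← w.1.two_mul_semilength_eq_length, w.2],
      isFirstPassage_dyckWord_append w⟩)
    ⟨fun w w' h => by
      simp only [Subtype.mk.injEq, append_left_inj,
        map_injective_iff.2 dyckStepEquivBool.injective |>.eq_iff] at h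
      exact Subtype.ext (DyckWord.ext h),
    fun ⟨l, hlen, hl⟩ => by
      obtain ⟨w, rfl⟩ := hl.exists_dyckWord
      refine ⟨⟨w, ?_⟩, rfl⟩
      have := w.two_mul_semilength_eq_length
      simp only [length_append, length_map, length_singleton] at hlen
      omega⟩

lemma card_isFirstPassage (m : ℕ) :
    Fintype.card {v : Fin (2 * m + 1) → Bool // IsFirstPassage (ofFn v)} = catalan m := by
  have toVector : {v : Fin (2 * m + 1) → Bool // IsFirstPassage (ofFn v)} ≃
      {v : List.Vector Bool (2 * m + 1) // IsFirstPassage v.toList} :=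
    (Equiv.vectorEquivFin Bool _).symm.subtypeEquiv fun v => by
      rw [Equiv.vectorEquivFin, Equiv.coe_fn_symm_mk, List.Vector.toList_ofFn]
  rw [← DyckWord.card_dyckWord_semilength_eq_catalan]
  exact Fintype.card_congr <| toVector.trans <|
    (Equiv.subtypeSubtypeEquivSubtypeInter _ _).trans (dyckWordEquivFirstPassage m).symm

section

variable {Ω : Type*}

def signPattern (X : ℕ → Ω → ℤ) (n : ℕ) (ω : Ω) : Fin n → Bool := fun i => X i ω = 1

lemma sum_range_eq_height_take_signPattern {X : ℕ → Ω → ℤ} {ω : Ω}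
    (hω : ∀ i, X i ω = 1 ∨ X i ω = -1) {n k : ℕ} (hk : k ≤ n) :
    ∑ i ∈ Finset.range k, X i ω = height ((List.ofFn (signPattern X n ω)).take k) := by
  induction k with
  | zero => simp
  | succ k ih =>
    rw [Finset.sum_range_succ, ih (by omega), height_take_succ (by simpa using hk),
      List.getElem_ofFn]
    rcases hω k with h | h <;> simp [signPattern, h]

lemma firstPassage_iff_isFirstPassage_signPattern {X : ℕ → Ω → ℤ} {ω : Ω}
    (hω : ∀ i, X i ω = 1 ∨ X i ω = -1) (n : ℕ) :
    (∑ i ∈ Finset.range n, X i ω = 1 ∧ ∀ k, 1 ≤ k → k < n → ∑ i ∈ Finset.range k, X i ω ≠ 1) ↔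
      IsFirstPassage (List.ofFn (signPattern X n ω)) := by
  have hS := fun k (hk : k ≤ n) => sum_range_eq_height_take_signPattern hω hk
  rw [IsFirstPassage, List.length_ofFn, hS n le_rfl, List.take_of_length_le (by simp)]
  refine and_congr_right fun _ => ⟨fun h k hk => ?_, fun h k _ hk => hS k hk.le ▸ h k hk⟩
  rcases k.eq_zero_or_pos with rfl | hk0
  · simp
  · exact hS k hk.le ▸ h k hk0 hk

end

section

variable {Ω : Type*} [MeasurableSpace Ω] {μ : Measure Ω} [IsProbabilityMeasure μ]

lemma ae_eq_one_or_eq_neg_one {Y : Ω → ℤ} (hY : Measurable Y) {p : ℝ} (hp0 : 0 ≤ p)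
    (hp1 : p ≤ 1) (h1 : μ {ω | Y ω = 1} = ENNReal.ofReal p)
    (h2 : μ {ω | Y ω = -1} = ENNReal.ofReal (1 - p)) :
    ∀ᵐ ω ∂μ, Y ω = 1 ∨ Y ω = -1 := by
  have hdisj : Disjoint {ω | Y ω = 1} {ω | Y ω = -1} :=
    Set.disjoint_left.2 fun ω h h' => by simp_all
  refine mem_ae_iff.2 <| (prob_compl_eq_zero_iff ((hY (measurableSet_singleton _)).union
    (hY (measurableSet_singleton _)))).2 ?_
  change μ ({ω | Y ω = 1} ∪ {ω | Y ω = -1}) = 1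
  rw [measure_union hdisj (hY (measurableSet_singleton _)), h1, h2,
    ← ENNReal.ofReal_add hp0 (by linarith), add_sub_cancel, ENNReal.ofReal_one]

lemma measurable_signPattern {X : ℕ → Ω → ℤ} (hmeas : ∀ i, Measurable (X i)) (n : ℕ) :
    Measurable (signPattern X n) :=
  measurable_pi_lambda _ fun i =>
    (Measurable.of_discrete (f := fun z : ℤ => decide (z = 1))).comp (hmeas i)

lemma measure_signPattern_preimage {X : ℕ → Ω → ℤ} (hmeas : ∀ i, Measurable (X i))
    (hindep : iIndepFun X μ) {p : ℝ} (hp0 : 0 ≤ p)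
    (hX1 : ∀ i, μ {ω | X i ω = 1} = ENNReal.ofReal p) {n : ℕ} (v : Fin n → Bool) :
    μ (signPattern X n ⁻¹' {v}) =
      ENNReal.ofReal p ^ (List.ofFn v).count true *
        ENNReal.ofReal (1 - p) ^ (List.ofFn v).count false := by
  set s : Fin n → Set ℤ := fun i => if v i then {1} else {1}ᶜ
  have hfiber : signPattern X n ⁻¹' {v} = ⋂ i : Fin n, X i ⁻¹' s i := by
    ext ω
    simp only [Set.mem_preimage, Set.mem_singleton_iff, Set.mem_iInter, funext_iff,
      signPattern, s]
    refine forall_congr' fun i => ?_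
    cases v i <;> simp
  have hX1c : ∀ i, μ (X i ⁻¹' {1}ᶜ) = ENNReal.ofReal (1 - p) := fun i => by
    rw [Set.preimage_compl, prob_compl_eq_one_sub (hmeas i (measurableSet_singleton _)),
      ENNReal.ofReal_sub _ hp0, ENNReal.ofReal_one, ← hX1 i]
    rfl
  rw [hfiber, (hindep.precomp Fin.val_injective).meas_iInter
    fun i => ⟨s i, .of_discrete, rfl⟩,
    ← List.prod_map_ite_bool, List.map_ofFn, List.prod_ofFn]
  refine Finset.prod_congr rfl fun i _ => ?_
  cases hv : v i
  · simpa [s, hv] using hX1c i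
  · simp only [s, hv, Function.comp_apply, ↓reduceIte]
    exact hX1 i

lemma measure_firstPassage_eq_sum {X : ℕ → Ω → ℤ} (hmeas : ∀ i, Measurable (X i))
    (hindep : iIndepFun X μ) {p : ℝ} (hp0 : 0 ≤ p)
    (hX1 : ∀ i, μ {ω | X i ω = 1} = ENNReal.ofReal p)
    (hae : ∀ᵐ ω ∂μ, ∀ i, X i ω = 1 ∨ X i ω = -1) (n : ℕ) :
    μ {ω | ∑ i ∈ Finset.range n, X i ω = 1 ∧
        ∀ k, 1 ≤ k → k < n → ∑ i ∈ Finset.range k, X i ω ≠ 1} =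
      ∑ v ∈ Finset.univ.filter (fun v : Fin n → Bool => IsFirstPassage (List.ofFn v)),
        ENNReal.ofReal p ^ (List.ofFn v).count true *
          ENNReal.ofReal (1 - p) ^ (List.ofFn v).count false := by
  calc _ = μ (signPattern X n ⁻¹'
        ↑(Finset.univ.filter fun v : Fin n → Bool => IsFirstPassage (List.ofFn v))) :=
        measure_congr <| Filter.eventuallyEq_set.2 <| hae.mono fun ω hω =>
          (firstPassage_iff_isFirstPassage_signPattern hω n).trans (by simp)
    _ = _ := by
      rw [← sum_measure_preimage_singleton _
        fun v _ => measurable_signPattern hmeas n (measurableSet_singleton v)]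
      exact Finset.sum_congr rfl fun v _ => measure_signPattern_preimage hmeas hindep hp0 hX1 v

end

end SimpleWalk

open SimpleWalk in
theorem law_tau1_general {Ω : Type*} [MeasurableSpace Ω] (μ : Measure Ω)
    [IsProbabilityMeasure μ]
    (p : ℝ) (hp0 : 0 < p) (hp1 : p < 1)
    (X : ℕ → Ω → ℤ) (hmeas : ∀ i, Measurable (X i))
    (hindep : iIndepFun X μ)
    (hX1 : ∀ i, μ {ω | X i ω = 1} = ENNReal.ofReal p)
    (hX2 : ∀ i, μ {ω | X i ω = -1} = ENNReal.ofReal (1 - p))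
    (S : ℕ → Ω → ℤ) (hS : ∀ n ω, S n ω = ∑ i ∈ Finset.range n, X i ω)
    (n : ℕ)
    :
    (Odd n →
      (μ {ω | S n ω = 1 ∧ ∀ m, 1 ≤ m → m < n → S m ω ≠ 1}).toReal
        = 2 * aCoef (n - 1) * p ^ ((n + 1) / 2) * (1 - p) ^ ((n - 1) / 2)) ∧
    (Even n →
      (μ {ω | S n ω = 1 ∧ ∀ m, 1 ≤ m → m < n → S m ω ≠ 1}).toReal = 0) := by
  have hae : ∀ᵐ ω ∂μ, ∀ i, X i ω = 1 ∨ X i ω = -1 :=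
    ae_all_iff.2 fun i => ae_eq_one_or_eq_neg_one (hmeas i) hp0.le hp1.le (hX1 i) (hX2 i)
  simp only [hS]
  rw [measure_firstPassage_eq_sum hmeas hindep hp0.le hX1 hae n]
  refine ⟨fun ⟨m, hm⟩ => ?_, fun hev => ?_⟩
  · subst hm
    have hterm : ∀ v ∈ univ.filter fun v : Fin (2 * m + 1) → Bool => IsFirstPassage (List.ofFn v),
        ENNReal.ofReal p ^ (List.ofFn v).count true *
          ENNReal.ofReal (1 - p) ^ (List.ofFn v).count false =
        ENNReal.ofReal p ^ (m + 1) * ENNReal.ofReal (1 - p) ^ m := fun v hv => by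
      obtain ⟨ht, hf⟩ := (mem_filter.1 hv).2.count_eq (List.length_ofFn)
      rw [ht, hf]
    rw [sum_congr rfl hterm, sum_const, ← Fintype.card_subtype, card_isFirstPassage,
      show (2 * m + 1 + 1) / 2 = m + 1 by omega, show (2 * m + 1 - 1) / 2 = m by omega,
      Nat.add_sub_cancel, two_mul_aCoef_two_mul]
    simp [ENNReal.toReal_ofReal hp0.le, ENNReal.toReal_ofReal (sub_nonneg.2 hp1.le), mul_assoc]
  · have hnone : ∀ v : Fin n → Bool, ¬IsFirstPassage (List.ofFn v) := fun v h =>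
      Nat.not_odd_iff_even.2 hev (by simpa using h.odd_length)
    rw [filter_false_of_mem fun v _ => hnone v, sum_empty, ENNReal.toReal_zero]

theorem law_tau1 {Ω : Type*} [MeasurableSpace Ω] (μ : Measure Ω)
    [IsProbabilityMeasure μ]
    (p : ℝ) (hp0 : 0 < p) (hp1 : p < 1)
    (X : ℕ → Ω → ℤ) (hmeas : ∀ i, Measurable (X i))
    (hindep : iIndepFun X μ)
    (hX1 : ∀ i, μ {ω | X i ω = 1} = ENNReal.ofReal p)
    (hX2 : ∀ i, μ {ω | X i ω = -1} = ENNReal.ofReal (1 - p))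
    (S : ℕ → Ω → ℤ) (hS : ∀ n ω, S n ω = ∑ i ∈ Finset.range n, X i ω)
    (n : ℕ) (hn : 1 ≤ n)
    :
    (Odd n →
      (μ {ω | S n ω = 1 ∧ ∀ m, 1 ≤ m → m < n → S m ω ≠ 1}).toReal
        = 2 * aCoef (n - 1) * p ^ ((n + 1) / 2) * (1 - p) ^ ((n - 1) / 2)) ∧
    (Even n →
      (μ {ω | S n ω = 1 ∧ ∀ m, 1 ≤ m → m < n → S m ω ≠ 1}).toReal = 0) :=
  law_tau1_general μ p hp0 hp1 X hmeas hindep hX1 hX2 S hS n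
end

section
/- Let T_n be the Chung–Feller sojourn time of the Bernoulli(p) random walk. For even integers k, n with 0 ≤ k ≤ n, P(T_n = k) = P(T_k = k) · P(T_{n−k} = 0). -/
/-!
Record the first `n` steps as a path `l : List Bool` of weight `p ^ #up * (1 - p) ^ #down`, so
that `P(T_n = k)` is the total weight `a(n, k)` of the paths of length `n` with sojourn time `k`;
`a(k, k)` and `a(m, 0)` are the weights `N⁺(k)`, `N⁻(m)` of the nonnegative and nonpositive paths.
Cutting a path at its first return to `0`, at time `r`, the excursion before `r` lies entirely
above or entirely below the axis, and excursions have even length. Hence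
`a(n, k) = ∑ᵣ f⁺(r) a(n - r, k - r) + ∑ᵣ f⁻(r) a(n - r, k)` for `0 < k < n`, with `f^±(r)` the
weights of the positive and negative excursions. Cutting the nonnegative paths in the same way,
and using that a nonnegative path of odd length ends at height `≥ 1` (so that
`N⁺(k) = N⁺(k - 1)` for even `k`), gives `∑ᵣ f⁺(r) N⁺(k - r) = (1 - p) N⁺(k)`, and by reflection
`∑ᵣ f⁻(r) N⁻(m - r) = p N⁻(m)`. Strong induction on `n` then yields
`a(n, k) = N⁺(k) N⁻(n - k)`, since `(1 - p) + p = 1`.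
-/

open MeasureTheory ProbabilityTheory Finset

namespace LatticePath

def step (b : Bool) : ℤ := if b then 1 else -1

def height (l : List Bool) : ℤ := (l.map step).sum

/-- The height after `j` steps; it stays at `height l` once `j ≥ l.length`. -/
def heightAt (l : List Bool) (j : ℕ) : ℤ := height (l.take j)

@[simp] lemma height_nil : height [] = 0 := rfl

@[simp] lemma height_cons (b : Bool) (l : List Bool) : height (b :: l) = step b + height l := by
  simp [height]

lemma height_append (e m : List Bool) : height (e ++ m) = height e + height m := by
  simp [height]

@[simp] lemma heightAt_length (l : List Bool) : heightAt l l.length = height l := by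
  simp [heightAt]

@[simp] lemma heightAt_zero (l : List Bool) : heightAt l 0 = 0 := by simp [heightAt]

lemma heightAt_of_length_le {l : List Bool} {j : ℕ} (h : l.length ≤ j) :
    heightAt l j = height l := by
  rw [heightAt, List.take_of_length_le h]

lemma heightAt_cons_succ (b : Bool) (l : List Bool) (j : ℕ) :
    heightAt (b :: l) (j + 1) = step b + heightAt l j := by
  simp [heightAt]

lemma heightAt_append (e m : List Bool) (j : ℕ) :
    heightAt (e ++ m) j = heightAt e j + heightAt m (j - e.length) := by
  rw [heightAt, List.take_append, height_append]; rfl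

lemma heightAt_succ {l : List Bool} {j : ℕ} (h : j < l.length) :
    heightAt l (j + 1) = heightAt l j + step l[j] := by
  rw [heightAt, List.take_add_one, List.getElem?_eq_getElem h, height_append]
  simp [heightAt, height]

lemma abs_step (b : Bool) : |step b| = 1 := by cases b <;> simp [step]

lemma abs_heightAt_succ_sub_le (l : List Bool) (j : ℕ) :
    |heightAt l (j + 1) - heightAt l j| ≤ 1 := by
  rcases lt_or_ge j l.length with h | h
  · rw [heightAt_succ h, add_sub_cancel_left, abs_step]
  · rw [heightAt_of_length_le h, heightAt_of_length_le (by omega), sub_self, abs_zero]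
    exact zero_le_one

lemma abs_heightAt_one {l : List Bool} (h : l ≠ []) : |heightAt l 1| = 1 := by
  obtain ⟨b, m, rfl⟩ := List.exists_cons_of_ne_nil h
  rw [heightAt_cons_succ, heightAt_zero, add_zero, abs_step]

lemma even_height_iff (l : List Bool) : Even (height l) ↔ Even l.length := by
  induction l with
  | nil => simp
  | cons b l ih => cases b <;> simp [step, Int.even_add, ih, parity_simps]

lemma heightAt_pos_of_ne_zero {l : List Bool} {J : ℕ} (h₁ : 0 < heightAt l 1)
    (hne : ∀ j, 0 < j → j < J → heightAt l j ≠ 0) {j : ℕ} (hj : 0 < j) (hjJ : j < J) :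
    0 < heightAt l j := by
  induction j with
  | zero => omega
  | succ i ih =>
    rcases Nat.eq_zero_or_pos i with rfl | hi
    · exact h₁
    · have := abs_le.1 (abs_heightAt_succ_sub_le l i)
      have := ih hi (by omega)
      have := hne (i + 1) hj hjJ
      omega

lemma forall_heightAt {l : List Bool} {P : ℤ → Prop} (h₀ : P 0)
    (h : ∀ i < l.length, P (heightAt l (i + 1))) (j : ℕ) : P (heightAt l j) := by
  rcases j with _ | i
  · simpa using h₀
  rcases lt_or_ge i l.length with hi | hi
  · exact h i hi
  · obtain ⟨k, hk⟩ | h0 : (∃ k, l.length = k + 1) ∨ l.length = 0 := by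
      cases l.length <;> simp
    · rw [heightAt_of_length_le (by omega), ← heightAt_length, hk]
      exact h k (by omega)
    · rw [heightAt_of_length_le (by omega), ← heightAt_length, h0, heightAt_zero]
      exact h₀

def Nonneg (l : List Bool) : Prop := ∀ j, 0 ≤ heightAt l j

def Nonpos (l : List Bool) : Prop := ∀ j, heightAt l j ≤ 0

lemma not_nonneg_and_nonpos {l : List Bool} (h : l ≠ []) : ¬(Nonneg l ∧ Nonpos l) := by
  rintro ⟨h₁, h₂⟩
  have := abs_heightAt_one h
  have := h₁ 1
  have := h₂ 1
  grind

lemma nonneg_append {e m : List Bool} (he : height e = 0) :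
    Nonneg (e ++ m) ↔ Nonneg e ∧ Nonneg m := by
  simp only [Nonneg, heightAt_append]
  refine ⟨fun h => ⟨fun j => ?_, fun j => ?_⟩, fun h j => add_nonneg (h.1 j) (h.2 _)⟩
  · rcases le_or_gt j e.length with hj | hj
    · simpa [Nat.sub_eq_zero_of_le hj] using h j
    · rw [heightAt_of_length_le hj.le, he]
  · simpa [heightAt_of_length_le (Nat.le_add_left e.length j), he] using h (j + e.length)

/-- After an odd number of steps a nonnegative path is at height `≥ 1`, so one more step
keeps it nonnegative. -/
lemma nonneg_append_singleton {e : List Bool} (he : Odd e.length) (b : Bool) :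
    Nonneg (e ++ [b]) ↔ Nonneg e := by
  refine ⟨fun h j => ?_, fun h j => ?_⟩
  · rcases le_or_gt j e.length with hj | hj
    · simpa [heightAt_append, Nat.sub_eq_zero_of_le hj] using h j
    · simpa [heightAt_append, heightAt_of_length_le hj.le] using h e.length
  · rw [heightAt_append]
    rcases le_or_gt j e.length with hj | hj
    · simpa [Nat.sub_eq_zero_of_le hj] using h j
    · have hodd : Odd (height e) := by
        rw [← Int.not_even_iff_odd, even_height_iff, Nat.not_even_iff_odd]
        exact he
      have : 1 ≤ height e := by
        have := h e.length
        rw [heightAt_length] at this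
        rcases hodd with ⟨c, hc⟩
        omega
      have := abs_le.1 (abs_step b).le
      rw [heightAt_of_length_le hj.le, heightAt_of_length_le (by simp; omega)]
      simp only [height_cons, height_nil] at *
      omega

def reflect (l : List Bool) : List Bool := l.map not

@[simp] lemma reflect_reflect (l : List Bool) : reflect (reflect l) = l := by
  simp [reflect, Function.comp_def]

@[simp] lemma length_reflect (l : List Bool) : (reflect l).length = l.length := by
  simp [reflect]

@[simp] lemma heightAt_reflect (l : List Bool) (j : ℕ) :
    heightAt (reflect l) j = -heightAt l j := by
  simp only [heightAt, reflect, ← List.map_take]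
  induction l.take j with
  | nil => simp
  | cons b l ih => cases b <;> simp_all [step] <;> ring

lemma nonpos_reflect {l : List Bool} : Nonpos (reflect l) ↔ Nonneg l := by
  simp [Nonpos, Nonneg]

lemma nonneg_reflect {l : List Bool} : Nonneg (reflect l) ↔ Nonpos l := by
  simp [Nonpos, Nonneg]

def sojourn (l : List Bool) : ℕ :=
  ∑ j ∈ range l.length,
    if 0 < heightAt l (j + 1) ∨ (heightAt l (j + 1) = 0 ∧ 0 < heightAt l j) then 1 else 0

lemma sojourn_eq_sum_Icc (l : List Bool) :
    sojourn l = ∑ j ∈ Icc 1 l.length,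
      if 0 < heightAt l j ∨ (heightAt l j = 0 ∧ 0 < heightAt l (j - 1)) then 1 else 0 := by
  rw [← Finset.Ico_add_one_right_eq_Icc, sum_Ico_eq_sum_range, sojourn, Nat.add_sub_cancel]
  refine sum_congr rfl fun j _ => ?_
  simp only [add_comm 1 j, Nat.add_sub_cancel]

lemma sojourn_le_length (l : List Bool) : sojourn l ≤ l.length := by
  rw [sojourn, ← card_filter]
  exact (card_filter_le _ _).trans (card_range _).le

lemma sojourn_append {e m : List Bool} (he : height e = 0) :
    sojourn (e ++ m) = sojourn e + sojourn m := by
  rw [sojourn, List.length_append, sum_range_add]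
  congr 1
  · refine sum_congr rfl fun j hj => ?_
    rw [mem_range] at hj
    simp only [heightAt_append, Nat.sub_eq_zero_of_le hj, Nat.sub_eq_zero_of_le hj.le,
      heightAt_zero, add_zero]
  · refine sum_congr rfl fun j _ => ?_
    simp only [heightAt_append, heightAt_of_length_le (Nat.le_add_right _ _), he, zero_add,
      add_assoc, Nat.add_sub_cancel_left]

lemma sojourn_eq_length_iff {l : List Bool} : sojourn l = l.length ↔ Nonneg l := by
  rw [sojourn, ← card_filter, ← Eq.congr_right (card_range _), card_filter_eq_iff]
  refine ⟨fun h => forall_heightAt le_rfl fun i hi => ?_, fun h j hj => ?_⟩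
  · have := h i (mem_range.2 hi)
    omega
  · rw [mem_range] at hj
    have := heightAt_succ hj
    have := abs_step l[j]
    have := h j
    have := h (j + 1)
    grind

lemma sojourn_eq_zero_iff {l : List Bool} : sojourn l = 0 ↔ Nonpos l := by
  rw [sojourn, ← card_filter, card_filter_eq_zero_iff]
  refine ⟨fun h => forall_heightAt (P := (· ≤ 0)) le_rfl fun i hi => ?_, fun h j _ => ?_⟩
  · have := h i (mem_range.2 hi)
    omega
  · have := h j
    have := h (j + 1)
    omega

/-- The first time `j ≥ 1` at which `l` is back at `0`, or `l.length + 1` if there is none. -/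
def firstReturn (l : List Bool) : ℕ :=
  Nat.find (⟨l.length + 1, by omega, .inr (by omega)⟩ :
    ∃ j, 0 < j ∧ (heightAt l j = 0 ∨ l.length < j))

lemma firstReturn_pos (l : List Bool) : 0 < firstReturn l :=
  (Nat.find_spec (p := fun j => 0 < j ∧ (heightAt l j = 0 ∨ l.length < j)) _).1

lemma firstReturn_le (l : List Bool) : firstReturn l ≤ l.length + 1 :=
  Nat.find_min' _ ⟨by omega, .inr (by omega)⟩

lemma heightAt_firstReturn {l : List Bool} (h : firstReturn l ≤ l.length) :
    heightAt l (firstReturn l) = 0 :=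
  ((Nat.find_spec (p := fun j => 0 < j ∧ (heightAt l j = 0 ∨ l.length < j)) _).2).resolve_right
    (by unfold firstReturn at h; omega)

lemma heightAt_ne_zero_of_lt_firstReturn {l : List Bool} {j : ℕ} (hj : 0 < j)
    (h : j < firstReturn l) : heightAt l j ≠ 0 :=
  fun h0 => Nat.find_min _ h ⟨hj, .inl h0⟩

lemma firstReturn_eq_length_add_one {l : List Bool}
    (h : ∀ j, 0 < j → j ≤ l.length → heightAt l j ≠ 0) : firstReturn l = l.length + 1 := by
  refine (firstReturn_le l).antisymm (not_lt.1 fun hlt => ?_)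
  exact h _ (firstReturn_pos l) (by omega) (heightAt_firstReturn (by omega))

lemma firstReturn_reflect (l : List Bool) : firstReturn (reflect l) = firstReturn l := by
  simp only [firstReturn, heightAt_reflect, neg_eq_zero, length_reflect]

lemma firstReturn_append_eq_length_iff {e m : List Bool} :
    firstReturn (e ++ m) = e.length ↔ firstReturn e = e.length := by
  simp only [firstReturn, Nat.find_eq_iff, heightAt_append, List.length_append]
  refine and_congr (by simp) (forall₂_congr fun j hj => ?_)
  rw [Nat.sub_eq_zero_of_le hj.le, heightAt_zero, add_zero]
  omega

lemma nonneg_of_length_le_firstReturn {l : List Bool} (h : l.length ≤ firstReturn l)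
    (h₁ : 0 < heightAt l 1) : Nonneg l := by
  refine forall_heightAt le_rfl fun i hi => ?_
  rcases (show i + 1 ≤ firstReturn l by omega).lt_or_eq with hlt | heq
  · exact (heightAt_pos_of_ne_zero h₁ (fun j hj => heightAt_ne_zero_of_lt_firstReturn hj)
      (Nat.succ_pos i) hlt).le
  · rw [heq, heightAt_firstReturn (by omega)]

/-- Until its first return a path keeps the sign of its first step. -/
lemma nonneg_or_nonpos_of_length_le_firstReturn {l : List Bool} (h : l.length ≤ firstReturn l) :
    Nonneg l ∨ Nonpos l := by
  rcases eq_or_ne l [] with rfl | hl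
  · exact .inl fun j => by simp [heightAt]
  rcases abs_eq (zero_le_one' ℤ) |>.1 (abs_heightAt_one hl) with h₁ | h₁
  · exact .inl (nonneg_of_length_le_firstReturn h (by omega))
  · refine .inr (nonneg_reflect.1 (nonneg_of_length_le_firstReturn ?_ ?_))
    · rwa [firstReturn_reflect, length_reflect]
    · rw [heightAt_reflect]; omega

lemma height_eq_zero_of_firstReturn_eq_length {e : List Bool} (h : firstReturn e = e.length) :
    height e = 0 := by
  rw [← heightAt_length, ← h, heightAt_firstReturn h.le]

lemma even_length_of_firstReturn_eq_length {e : List Bool} (h : firstReturn e = e.length) :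
    Even e.length :=
  (even_height_iff e).1 (by simp [height_eq_zero_of_firstReturn_eq_length h])

lemma nonpos_iff_not_nonneg_of_firstReturn_eq_length {e : List Bool}
    (h : firstReturn e = e.length) : Nonpos e ↔ ¬Nonneg e := by
  have hne : e ≠ [] := fun he => by simpa [he] using (firstReturn_pos e).trans_eq h
  have := not_nonneg_and_nonpos hne
  have := nonneg_or_nonpos_of_length_le_firstReturn h.ge
  tauto

lemma nonneg_cons_and_firstReturn_iff (b : Bool) (m : List Bool) :
    Nonneg (b :: m) ∧ firstReturn (b :: m) = m.length + 2 ↔ b = true ∧ Nonneg m := by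
  constructor
  · rintro ⟨hnn, hfr⟩
    have hpos : ∀ j ≤ m.length, 0 < heightAt (b :: m) (j + 1) := fun j hj =>
      (hnn _).lt_of_ne' (heightAt_ne_zero_of_lt_firstReturn (Nat.succ_pos j) (by omega))
    have hb : b = true := by
      have := hpos 0 (Nat.zero_le _)
      cases b <;> simp_all [heightAt_cons_succ, step]
    subst hb
    refine ⟨rfl, forall_heightAt le_rfl fun i hi => ?_⟩
    have := hpos (i + 1) hi
    rw [heightAt_cons_succ] at this
    simp only [step, if_true] at this
    omega
  · rintro ⟨rfl, hm⟩
    have hpos : ∀ j, 0 < heightAt (true :: m) (j + 1) := fun j => by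
      rw [heightAt_cons_succ]; have := hm j; simp only [step, if_true]; omega
    refine ⟨forall_heightAt le_rfl fun i _ => (hpos i).le, ?_⟩
    refine firstReturn_eq_length_add_one fun j hj _ => ?_
    obtain ⟨i, rfl⟩ := Nat.exists_eq_add_of_lt hj
    simpa using (hpos i).ne'

section Mass

variable {R : Type*} [CommRing R]

def paths (n : ℕ) : Finset (List Bool) :=
  (univ : Finset (Fin n → Bool)).map ⟨List.ofFn, List.ofFn_injective⟩

lemma mem_paths {n : ℕ} {l : List Bool} : l ∈ paths n ↔ l.length = n := by
  refine ⟨fun h => ?_, fun h => ?_⟩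
  · obtain ⟨f, -, rfl⟩ := mem_map.1 h
    exact List.length_ofFn
  · subst h
    exact mem_map.2 ⟨l.get, mem_univ _, List.ofFn_get l⟩

def weight (p : R) (l : List Bool) : R := (l.map fun b => if b then p else 1 - p).prod

lemma weight_append (p : R) (e m : List Bool) : weight p (e ++ m) = weight p e * weight p m := by
  simp [weight]

lemma weight_reflect (p : R) (l : List Bool) : weight p (reflect l) = weight (1 - p) l := by
  simp only [weight, reflect, List.map_map]
  congr 2
  ext b
  cases b <;> simp

open Classical in
noncomputable def mass (p : R) (n : ℕ) (P : List Bool → Prop) : R :=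
  ∑ l ∈ paths n with P l, weight p l

lemma mass_congr {p : R} {n : ℕ} {P Q : List Bool → Prop}
    (h : ∀ l : List Bool, l.length = n → (P l ↔ Q l)) : mass p n P = mass p n Q := by
  classical
  unfold mass
  congr 1
  exact filter_congr fun l hl => h l (mem_paths.1 hl)

lemma mass_eq_zero {p : R} {n : ℕ} {P : List Bool → Prop}
    (h : ∀ l : List Bool, l.length = n → ¬P l) : mass p n P = 0 := by
  classical
  unfold mass
  rw [filter_false_of_mem fun l hl => h l (mem_paths.1 hl), sum_empty]

lemma mass_eq_mass_and_add_mass_and_not (p : R) (n : ℕ) (P Q : List Bool → Prop) :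
    mass p n P = mass p n (fun l => P l ∧ Q l) + mass p n (fun l => P l ∧ ¬Q l) := by
  classical
  simp only [mass, ← filter_filter]
  exact (sum_filter_add_sum_filter_not _ _ _).symm

lemma sum_paths_add {M : Type*} [AddCommMonoid M] (r s : ℕ) (f : List Bool → M) :
    ∑ l ∈ paths (r + s), f l = ∑ e ∈ paths r, ∑ m ∈ paths s, f (e ++ m) := by
  rw [← sum_product']
  refine sum_nbij' (fun l => (l.take r, l.drop r)) (fun em => em.1 ++ em.2) ?_ ?_ ?_ ?_ ?_
  · intro l hl
    simp only [mem_product, mem_paths, List.length_take, List.length_drop, mem_paths.1 hl]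
    omega
  · intro em hem
    simp only [mem_product, mem_paths] at hem
    simp [mem_paths, hem.1, hem.2]
  · intro l _
    exact List.take_append_drop r l
  · rintro ⟨e, m⟩ hem
    simp only [mem_product, mem_paths] at hem
    simp [← hem.1]
  · intro l _
    simp

lemma mass_append {p : R} {r s : ℕ} {P Q Q' : List Bool → Prop}
    (h : ∀ e m : List Bool, e.length = r → m.length = s → (P (e ++ m) ↔ Q e ∧ Q' m)) :
    mass p (r + s) P = mass p r Q * mass p s Q' := by
  classical
  simp only [mass, sum_filter, sum_paths_add, sum_mul_sum]
  refine sum_congr rfl fun e he => sum_congr rfl fun m hm => ?_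
  rw [h e m (mem_paths.1 he) (mem_paths.1 hm), weight_append]
  split_ifs <;> simp_all

lemma mass_reflect (p : R) (n : ℕ) (P : List Bool → Prop) :
    mass p n P = mass (1 - p) n (fun l => P (reflect l)) := by
  classical
  simp only [mass, sum_filter]
  refine sum_nbij' reflect reflect ?_ ?_ ?_ ?_ ?_ <;> intro l hl <;>
    simp_all [mem_paths, reflect_reflect, ← weight_reflect]

lemma mass_zero {p : R} {P : List Bool → Prop} (h : P []) : mass p 0 P = 1 := by
  classical
  have : paths 0 = {[]} := by ext l; simp [mem_paths]
  simp [mass, sum_filter, this, h, weight]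

lemma paths_one : paths 1 = {[true], [false]} := by
  ext l
  simp only [mem_paths, mem_insert, mem_singleton, List.length_eq_one_iff]
  constructor
  · rintro ⟨b, rfl⟩; cases b <;> simp
  · rintro (rfl | rfl) <;> simp

lemma mass_one_up (p : R) : mass p 1 (fun e => e = [true]) = p := by
  classical
  simp [mass, sum_filter, paths_one, weight]

lemma mass_one_any (p : R) : mass p 1 (fun _ => True) = 1 := by
  classical
  simp [mass, paths_one, weight]

lemma mass_eq_sum_firstReturn (p : R) (n : ℕ) (P : List Bool → Prop) :
    mass p n P = ∑ r ∈ Icc 1 (n + 1), mass p n (fun l => P l ∧ firstReturn l = r) := by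
  classical
  simp only [mass, ← filter_filter]
  refine (sum_fiberwise_of_maps_to (fun l hl => ?_) _).symm
  rw [mem_Icc, ← (mem_paths.1 (mem_filter.1 hl).1)]
  exact ⟨firstReturn_pos l, firstReturn_le l⟩

lemma mass_nonneg_and_firstReturn (p : R) {k r : ℕ} (hr : r ≤ k) :
    mass p k (fun l => Nonneg l ∧ firstReturn l = r) =
      mass p r (fun e => firstReturn e = r ∧ Nonneg e) * mass p (k - r) Nonneg := by
  obtain ⟨s, rfl⟩ := Nat.exists_eq_add_of_le hr
  rw [Nat.add_sub_cancel_left]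
  refine mass_append fun e m he _ => ?_
  rw [← he, firstReturn_append_eq_length_iff]
  by_cases hfr : firstReturn e = e.length
  · rw [nonneg_append (height_eq_zero_of_firstReturn_eq_length hfr)]
    tauto
  · tauto

lemma mass_nonneg_and_firstReturn_length_add_one (p : R) (k : ℕ) :
    mass p (k + 1) (fun l => Nonneg l ∧ firstReturn l = k + 2) = p * mass p k Nonneg := by
  rw [add_comm k 1]
  refine (mass_append (Q := (· = [true])) (Q' := Nonneg) fun e m he hm => ?_).trans
    (by rw [mass_one_up])
  obtain ⟨b, rfl⟩ := List.length_eq_one_iff.1 he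
  rw [List.singleton_append, ← hm, nonneg_cons_and_firstReturn_iff]
  simp

/-- The last term is the weight of the nonnegative paths that never return to `0`: they start
with an up-step. -/
lemma mass_nonneg_succ (p : R) (k : ℕ) :
    mass p (k + 1) Nonneg =
      ∑ r ∈ Icc 1 (k + 1), mass p r (fun e => firstReturn e = r ∧ Nonneg e) *
        mass p (k + 1 - r) Nonneg + p * mass p k Nonneg := by
  rw [mass_eq_sum_firstReturn, sum_Icc_succ_top (by omega),
    mass_nonneg_and_firstReturn_length_add_one]
  exact congrArg (· + _) (sum_congr rfl fun r hr => mass_nonneg_and_firstReturn p (mem_Icc.1 hr).2)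

lemma mass_nonneg_succ_of_odd (p : R) {k : ℕ} (hk : Odd k) :
    mass p (k + 1) Nonneg = mass p k Nonneg := by
  rw [← mul_one (mass p k Nonneg), ← mass_one_any p]
  refine mass_append fun e m he hm => ?_
  obtain ⟨b, rfl⟩ := List.length_eq_one_iff.1 hm
  simpa using nonneg_append_singleton (he ▸ hk) b

lemma sum_mass_excursion_mul_mass_nonneg (p : R) {k : ℕ} (hk : Even k) (hk₀ : 0 < k) :
    ∑ r ∈ Icc 1 k, mass p r (fun e => firstReturn e = r ∧ Nonneg e) * mass p (k - r) Nonneg =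
      (1 - p) * mass p k Nonneg := by
  obtain ⟨j, rfl⟩ : ∃ j, k = j + 1 := ⟨k - 1, by omega⟩
  have hj : Odd j := by simpa [Nat.even_add_one] using hk
  have := mass_nonneg_succ p j
  rw [mass_nonneg_succ_of_odd p hj] at this ⊢
  linear_combination -this

lemma mass_nonpos (p : R) (n : ℕ) : mass p n Nonpos = mass (1 - p) n Nonneg := by
  simp only [mass_reflect p n Nonpos, nonpos_reflect]

lemma mass_excursion_nonpos (p : R) (r : ℕ) :
    mass p r (fun e => firstReturn e = r ∧ Nonpos e) =
      mass (1 - p) r (fun e => firstReturn e = r ∧ Nonneg e) := by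
  simp only [mass_reflect p r, firstReturn_reflect, nonpos_reflect]

lemma sum_mass_excursion_mul_mass_nonpos (p : R) {k : ℕ} (hk : Even k) (hk₀ : 0 < k) :
    ∑ r ∈ Icc 1 k, mass p r (fun e => firstReturn e = r ∧ Nonpos e) * mass p (k - r) Nonpos =
      p * mass p k Nonpos := by
  simp only [mass_excursion_nonpos, mass_nonpos, sum_mass_excursion_mul_mass_nonneg _ hk hk₀,
    sub_sub_cancel]

lemma mass_excursion_mul_congr (p : R) {r : ℕ} (P : List Bool → Prop) {a b : R}
    (h : Even r → a = b) :
    mass p r (fun e => firstReturn e = r ∧ P e) * a =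
      mass p r (fun e => firstReturn e = r ∧ P e) * b := by
  rcases Nat.even_or_odd r with hr | hr
  · rw [h hr]
  · have : mass p r (fun e => firstReturn e = r ∧ P e) = 0 := mass_eq_zero fun e he ⟨hfr, _⟩ =>
      Nat.not_even_iff_odd.2 hr (he ▸ even_length_of_firstReturn_eq_length (he ▸ hfr))
    rw [this, zero_mul, zero_mul]

lemma mass_sojourn_and_firstReturn (p : R) {n k r : ℕ} (hr : r ≤ n) :
    mass p n (fun l => sojourn l = k ∧ firstReturn l = r) =
      mass p r (fun e => firstReturn e = r ∧ Nonneg e) *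
          mass p (n - r) (fun m => r + sojourn m = k) +
        mass p r (fun e => firstReturn e = r ∧ Nonpos e) *
          mass p (n - r) (fun m => sojourn m = k) := by
  obtain ⟨s, rfl⟩ := Nat.exists_eq_add_of_le hr
  rw [Nat.add_sub_cancel_left,
    mass_eq_mass_and_add_mass_and_not p _ _ fun l => Nonneg (l.take r)]
  congr 1 <;> refine mass_append fun e m he _ => ?_ <;>
    rw [List.take_left' he, ← he, firstReturn_append_eq_length_iff]
  all_goals
    by_cases hfr : firstReturn e = e.length
    · have hnp := nonpos_iff_not_nonneg_of_firstReturn_eq_length hfr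
      rw [sojourn_append (height_eq_zero_of_firstReturn_eq_length hfr)]
      by_cases hnn : Nonneg e
      · simp [hfr, hnn, hnp, sojourn_eq_length_iff.2 hnn]
      · simp [hfr, hnn, hnp, sojourn_eq_zero_iff.2 (hnp.2 hnn)]
    · tauto

lemma mass_sojourn_eq_length (p : R) (n : ℕ) :
    mass p n (fun l => sojourn l = n) = mass p n Nonneg :=
  mass_congr fun _ hl => hl ▸ sojourn_eq_length_iff

lemma mass_sojourn_eq_zero (p : R) (n : ℕ) :
    mass p n (fun l => sojourn l = 0) = mass p n Nonpos :=
  mass_congr fun _ _ => sojourn_eq_zero_iff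

lemma mass_sojourn_eq_zero_of_lt (p : R) {n k : ℕ} (h : n < k) :
    mass p n (fun l => sojourn l = k) = 0 :=
  mass_eq_zero fun l hl hk => absurd (sojourn_le_length l) (by omega)

/-- A path that never returns to `0` has sojourn time `0` or `n`. -/
lemma mass_sojourn_and_firstReturn_length_add_one (p : R) {n k : ℕ} (hk₀ : 0 < k) (hkn : k < n) :
    mass p n (fun l => sojourn l = k ∧ firstReturn l = n + 1) = 0 := by
  refine mass_eq_zero fun l hl ⟨hk, hfr⟩ => ?_
  rcases nonneg_or_nonpos_of_length_le_firstReturn (by omega : l.length ≤ firstReturn l) with h | h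
  · have := sojourn_eq_length_iff.2 h; omega
  · have := sojourn_eq_zero_iff.2 h; omega

lemma mass_sojourn_eq_sum (p : R) {n k : ℕ} (hk₀ : 0 < k) (hkn : k < n) :
    mass p n (fun l => sojourn l = k) =
      ∑ r ∈ Icc 1 k, mass p r (fun e => firstReturn e = r ∧ Nonneg e) *
          mass p (n - r) (fun m => sojourn m = k - r) +
        ∑ r ∈ Icc 1 (n - k), mass p r (fun e => firstReturn e = r ∧ Nonpos e) *
          mass p (n - r) (fun m => sojourn m = k) := by
  rw [mass_eq_sum_firstReturn, sum_Icc_succ_top (by omega),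
    mass_sojourn_and_firstReturn_length_add_one p hk₀ hkn, add_zero,
    sum_congr rfl fun r hr => mass_sojourn_and_firstReturn p (mem_Icc.1 hr).2, sum_add_distrib]
  congr 1
  · rw [← sum_subset (Icc_subset_Icc_right hkn.le) fun r hr hr' => ?_]
    · refine sum_congr rfl fun r hr => congrArg _ (mass_congr fun m _ => ?_)
      have := (mem_Icc.1 hr).2
      omega
    · simp only [mem_Icc] at hr hr'
      exact mul_eq_zero_of_right _ (mass_eq_zero fun m _ => by omega)
  · refine (sum_subset (Icc_subset_Icc_right (Nat.sub_le n k)) fun r hr hr' => ?_).symm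
    simp only [mem_Icc] at hr hr'
    rw [mass_sojourn_eq_zero_of_lt p (by omega), mul_zero]

lemma mass_sojourn_eq_mul (p : R) {n k : ℕ} (hn : Even n) (hk : Even k) (hkn : k ≤ n) :
    mass p n (fun l => sojourn l = k) = mass p k Nonneg * mass p (n - k) Nonpos := by
  induction n using Nat.strong_induction_on generalizing k with
  | _ n ih =>
  rcases Nat.eq_zero_or_pos k with rfl | hk₀
  · rw [mass_zero (fun _ => by simp [heightAt]), one_mul, Nat.sub_zero, mass_sojourn_eq_zero]
  rcases hkn.eq_or_lt with rfl | hkn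
  · rw [Nat.sub_self, mass_zero (fun _ => by simp [heightAt]), mul_one, mass_sojourn_eq_length]
  have h₁ : ∀ r ∈ Icc 1 k, mass p r (fun e => firstReturn e = r ∧ Nonneg e) *
      mass p (n - r) (fun m => sojourn m = k - r) =
        mass p r (fun e => firstReturn e = r ∧ Nonneg e) * mass p (k - r) Nonneg *
          mass p (n - k) Nonpos := fun r hr => by
    rw [mul_assoc]
    refine mass_excursion_mul_congr p _ fun hr' => ?_
    rw [mem_Icc] at hr
    rw [ih (n - r) (by omega) (hn.tsub hr') (hk.tsub hr') (by omega),
      show n - r - (k - r) = n - k by omega]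
  have h₂ : ∀ r ∈ Icc 1 (n - k), mass p r (fun e => firstReturn e = r ∧ Nonpos e) *
      mass p (n - r) (fun m => sojourn m = k) =
        mass p k Nonneg * (mass p r (fun e => firstReturn e = r ∧ Nonpos e) *
          mass p (n - k - r) Nonpos) := fun r hr => by
    rw [mul_left_comm]
    refine mass_excursion_mul_congr p _ fun hr' => ?_
    rw [mem_Icc] at hr
    rw [ih (n - r) (by omega) (hn.tsub hr') hk (by omega), show n - r - k = n - k - r by omega]
  rw [mass_sojourn_eq_sum p hk₀ hkn, sum_congr rfl h₁, sum_congr rfl h₂, ← sum_mul, ← mul_sum,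
    sum_mass_excursion_mul_mass_nonneg p hk hk₀,
    sum_mass_excursion_mul_mass_nonpos p (hn.tsub hk) (by omega)]
  ring

end Mass

section Walk

variable {Ω : Type*} {X : ℕ → Ω → ℤ}

def steps (X : ℕ → Ω → ℤ) (n : ℕ) (ω : Ω) : Fin n → Bool := fun i => decide (X i ω = 1)

lemma heightAt_ofFn_steps {ω : Ω} (hω : ∀ i, X i ω = 1 ∨ X i ω = -1) {n j : ℕ} (hj : j ≤ n) :
    heightAt (List.ofFn (steps X n ω)) j = ∑ i ∈ range j, X i ω := by
  induction j with
  | zero => simp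
  | succ j ih =>
    rw [heightAt_succ (by simpa using hj), ih (by omega), sum_range_succ, List.getElem_ofFn]
    congr 1
    rcases hω j with h | h <;> simp [steps, step, h]

variable [MeasurableSpace Ω] {μ : Measure Ω} {p : ℝ}

lemma measurable_steps (hmeas : ∀ i, Measurable (X i)) (n : ℕ) : Measurable (steps X n) :=
  measurable_pi_lambda _ fun i =>
    (Measurable.of_discrete (f := fun z : ℤ => decide (z = 1))).comp (hmeas i)

lemma measureReal_steps_preimage_singleton [IsProbabilityMeasure μ] (hp₀ : 0 ≤ p)
    (hmeas : ∀ i, Measurable (X i)) (hindep : iIndepFun X μ)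
    (hX : ∀ i, μ {ω | X i ω = 1} = ENNReal.ofReal p) {n : ℕ} (f : Fin n → Bool) :
    μ.real (steps X n ⁻¹' {f}) = weight p (List.ofFn f) := by
  have hset : steps X n ⁻¹' {f} = ⋂ i : Fin n, X i ⁻¹' {z | decide (z = 1) = f i} := by
    ext ω
    simp [steps, funext_iff]
  have hone : ∀ i, μ.real (X i ⁻¹' {1}) = p := fun i => by
    rw [measureReal_def, ← ENNReal.toReal_ofReal hp₀, ← hX i]
    rfl
  rw [hset, measureReal_def, (hindep.precomp Fin.val_injective).meas_iInter
    fun i => ⟨_, MeasurableSet.of_discrete, rfl⟩, ENNReal.toReal_prod, weight, List.map_ofFn,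
    List.prod_ofFn]
  refine prod_congr rfl fun i _ => ?_
  rw [← measureReal_def, Function.comp_apply]
  cases f i
  · rw [show {z : ℤ | decide (z = 1) = false} = {1}ᶜ by ext; simp, Set.preimage_compl,
      probReal_compl_eq_one_sub (hmeas i (measurableSet_singleton 1)), hone]
    rfl
  · rw [show {z : ℤ | decide (z = 1) = true} = {1} by ext; simp, hone]
    rfl

lemma measureReal_ofFn_steps [IsProbabilityMeasure μ] (hp₀ : 0 ≤ p)
    (hmeas : ∀ i, Measurable (X i)) (hindep : iIndepFun X μ)
    (hX : ∀ i, μ {ω | X i ω = 1} = ENNReal.ofReal p) (n : ℕ) (P : List Bool → Prop) :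
    μ.real {ω | P (List.ofFn (steps X n ω))} = mass p n P := by
  classical
  have hset : {ω | P (List.ofFn (steps X n ω))} =
      steps X n ⁻¹' ↑(univ.filter (P ∘ List.ofFn) : Finset (Fin n → Bool)) := by
    ext; simp
  rw [hset, ← sum_measureReal_preimage_singleton _ fun f _ =>
    measurable_steps hmeas n (measurableSet_singleton f)]
  simp only [mass, paths, sum_filter, sum_map]
  refine sum_congr rfl fun f _ => ?_
  simp only [Function.comp_apply, Function.Embedding.coeFn_mk,
    measureReal_steps_preimage_singleton hp₀ hmeas hindep hX]

lemma ae_eq_one_or_eq_neg_one [IsProbabilityMeasure μ] (hp₀ : 0 ≤ p) (hp₁ : p ≤ 1)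
    (hmeas : ∀ i, Measurable (X i)) (hX₁ : ∀ i, μ {ω | X i ω = 1} = ENNReal.ofReal p)
    (hX₂ : ∀ i, μ {ω | X i ω = -1} = ENNReal.ofReal (1 - p)) :
    ∀ᵐ ω ∂μ, ∀ i, X i ω = 1 ∨ X i ω = -1 := by
  refine ae_all_iff.2 fun i => mem_ae_iff.2 ((prob_compl_eq_zero_iff ?_).2 ?_)
  · exact (hmeas i (measurableSet_singleton _)).union (hmeas i (measurableSet_singleton _))
  · have hdisj : Disjoint {ω | X i ω = 1} {ω | X i ω = -1} :=
      Set.disjoint_left.2 fun ω h₁ h₂ => by simp_all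
    show μ ({ω | X i ω = 1} ∪ {ω | X i ω = -1}) = 1
    rw [measure_union hdisj (hmeas i (measurableSet_singleton _)), hX₁, hX₂,
      ← ENNReal.ofReal_add hp₀ (by linarith), add_sub_cancel, ENNReal.ofReal_one]

lemma measureReal_sojourn_eq [IsProbabilityMeasure μ] (hp₀ : 0 ≤ p) (hp₁ : p ≤ 1)
    (hmeas : ∀ i, Measurable (X i)) (hindep : iIndepFun X μ)
    (hX₁ : ∀ i, μ {ω | X i ω = 1} = ENNReal.ofReal p)
    (hX₂ : ∀ i, μ {ω | X i ω = -1} = ENNReal.ofReal (1 - p))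
    {S : ℕ → Ω → ℤ} (hS : ∀ n ω, S n ω = ∑ i ∈ range n, X i ω) {T : ℕ → Ω → ℕ}
    (hT : ∀ n ω, T n ω = ∑ j ∈ Icc 1 n,
      (if 0 < S j ω ∨ (S j ω = 0 ∧ 0 < S (j - 1) ω) then 1 else 0)) (n k : ℕ) :
    μ.real {ω | T n ω = k} = mass p n (fun l => sojourn l = k) := by
  rw [← measureReal_ofFn_steps hp₀ hmeas hindep hX₁ n]
  refine measureReal_congr (Filter.eventuallyEq_set.2 ?_)
  filter_upwards [ae_eq_one_or_eq_neg_one hp₀ hp₁ hmeas hX₁ hX₂] with ω hω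
  suffices T n ω = sojourn (List.ofFn (steps X n ω)) by simp [this]
  rw [hT, sojourn_eq_sum_Icc, List.length_ofFn]
  refine sum_congr rfl fun j hj => ?_
  rw [mem_Icc] at hj
  simp only [heightAt_ofFn_steps hω hj.2, heightAt_ofFn_steps hω ((j.sub_le 1).trans hj.2), hS]

end Walk

end LatticePath

theorem sojourn_product {Ω : Type*} [MeasurableSpace Ω] (μ : Measure Ω)
    [IsProbabilityMeasure μ]
    (p : ℝ) (hp0 : 0 < p) (hp1 : p < 1)
    (X : ℕ → Ω → ℤ) (hmeas : ∀ i, Measurable (X i))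
    (hindep : iIndepFun X μ)
    (hX1 : ∀ i, μ {ω | X i ω = 1} = ENNReal.ofReal p)
    (hX2 : ∀ i, μ {ω | X i ω = -1} = ENNReal.ofReal (1 - p))
    (S : ℕ → Ω → ℤ) (hS : ∀ n ω, S n ω = ∑ i ∈ Finset.range n, X i ω)
    (T : ℕ → Ω → ℕ)
    (hT : ∀ n ω, T n ω = ∑ j ∈ Finset.Icc 1 n,
        (if 0 < S j ω ∨ (S j ω = 0 ∧ 0 < S (j - 1) ω) then 1 else 0))
    (n k : ℕ) (hn : Even n) (hk : Even k) (hkn : k ≤ n)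
    :
    (μ {ω | T n ω = k}).toReal
      = (μ {ω | T k ω = k}).toReal * (μ {ω | T (n - k) ω = 0}).toReal := by
  have law := LatticePath.measureReal_sojourn_eq hp0.le hp1.le hmeas hindep hX1 hX2 hS hT
  simp only [← measureReal_def, law, LatticePath.mass_sojourn_eq_mul p hn hk hkn,
    LatticePath.mass_sojourn_eq_length, LatticePath.mass_sojourn_eq_zero]
end

section
/- Let T_n be the Chung–Feller sojourn time of the Bernoulli(p) random walk. For odd integers n, k with 0 ≤ k ≤ n−1, P(T_n = k) + P(T_n = k+1) = P(T_{n+1} = k+1). -/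
/-!
The identity holds path by path once the steps are `±1`, which is almost sure. A simple walk is
nonzero at odd times, so `δ (2m + 2) = δ (2m + 1)` and `T` is even at even times. For odd `n` this makes
`T (n + 1)` even, and as `T (n + 1) - T n ∈ {0, 1}` with `k` odd, `T (n + 1) = k + 1` exactly when
`T n = k` or `T n = k + 1`; these two events are disjoint.
-/

open MeasureTheory ProbabilityTheory Finset

def IsSimpleWalk (S : ℕ → ℤ) : Prop :=
  S 0 = 0 ∧ ∀ j, S (j + 1) - S j = 1 ∨ S (j + 1) - S j = -1

lemma isSimpleWalk_partialSums {x : ℕ → ℤ} (hx : ∀ i, x i = 1 ∨ x i = -1) :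
    IsSimpleWalk fun n => ∑ i ∈ range n, x i := by
  refine ⟨sum_range_zero x, fun j => ?_⟩
  simpa only [sum_range_succ, add_sub_cancel_left] using hx j

def sojournStep (S : ℕ → ℤ) (j : ℕ) : ℕ :=
  if 0 < S j ∨ (S j = 0 ∧ 0 < S (j - 1)) then 1 else 0

def sojournTime (S : ℕ → ℤ) (n : ℕ) : ℕ :=
  ∑ j ∈ Icc 1 n, sojournStep S j

lemma sojournStep_le_one (S : ℕ → ℤ) (j : ℕ) : sojournStep S j ≤ 1 := by
  unfold sojournStep; split <;> omega

lemma sojournTime_succ (S : ℕ → ℤ) (n : ℕ) :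
    sojournTime S (n + 1) = sojournTime S n + sojournStep S (n + 1) :=
  sum_Icc_succ_top (Nat.le_add_left 1 n) _

lemma sojournStep_succ_of_ne_zero {S : ℕ → ℤ} {j : ℕ} (hj : S j ≠ 0)
    (hstep : |S (j + 1) - S j| ≤ 1) : sojournStep S (j + 1) = sojournStep S j := by
  rw [abs_le] at hstep
  unfold sojournStep
  congr 1
  simp only [Nat.add_sub_cancel, eq_iff_iff]
  omega

namespace IsSimpleWalk

variable {S : ℕ → ℤ}

lemma even_iff (hS : IsSimpleWalk S) (j : ℕ) : Even (S j) ↔ Even j := by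
  induction j with
  | zero => simp [hS.1]
  | succ j ih =>
    rcases hS.2 j with h | h
    · rw [show S (j + 1) = S j + 1 by omega, Int.even_add_one, Nat.even_add_one, ih]
    · rw [show S (j + 1) = S j - 1 by omega, Int.even_sub_one, Nat.even_add_one, ih]

lemma ne_zero_of_odd (hS : IsSimpleWalk S) {j : ℕ} (hj : Odd j) : S j ≠ 0 := fun h =>
  Nat.not_even_iff_odd.2 hj ((hS.even_iff j).1 (h ▸ Even.zero))

lemma sojournStep_succ_of_odd (hS : IsSimpleWalk S) {j : ℕ} (hj : Odd j) :
    sojournStep S (j + 1) = sojournStep S j :=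
  sojournStep_succ_of_ne_zero (hS.ne_zero_of_odd hj) (by rcases hS.2 j with h | h <;> simp [h])

lemma even_sojournTime_two_mul (hS : IsSimpleWalk S) (m : ℕ) : Even (sojournTime S (2 * m)) := by
  induction m with
  | zero => simp [sojournTime]
  | succ m ih =>
    rw [show 2 * (m + 1) = 2 * m + 1 + 1 by ring, sojournTime_succ, sojournTime_succ,
      hS.sojournStep_succ_of_odd (odd_two_mul_add_one m), add_assoc]
    exact ih.add ⟨_, rfl⟩

lemma sojournTime_succ_eq_iff (hS : IsSimpleWalk S) {n k : ℕ} (hn : Odd n) (hk : Odd k) :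
    sojournTime S (n + 1) = k + 1 ↔ sojournTime S n = k ∨ sojournTime S n = k + 1 := by
  obtain ⟨m, rfl⟩ := hn
  have heven := hS.even_sojournTime_two_mul (m + 1)
  rw [show 2 * (m + 1) = 2 * m + 1 + 1 by ring] at heven
  rw [sojournTime_succ] at heven ⊢
  have hle := sojournStep_le_one S (2 * m + 1 + 1)
  rw [Nat.even_iff] at heven
  rw [Nat.odd_iff] at hk
  omega

end IsSimpleWalk

lemma ae_eq_one_or_eq_neg_one {Ω : Type*} [MeasurableSpace Ω] {μ : Measure Ω}
    [IsProbabilityMeasure μ] {X : Ω → ℤ} (hX : Measurable X) {p : ℝ}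
    (h1 : μ {ω | X ω = 1} = ENNReal.ofReal p) (h2 : μ {ω | X ω = -1} = ENNReal.ofReal (1 - p)) :
    ∀ᵐ ω ∂μ, X ω = 1 ∨ X ω = -1 := by
  have hdisj : Disjoint {ω | X ω = 1} {ω | X ω = -1} :=
    Set.disjoint_left.2 fun ω h1 h2 => by simp_all
  have hm : MeasurableSet ({ω | X ω = 1} ∪ {ω | X ω = -1}) :=
    (hX (measurableSet_singleton _)).union (hX (measurableSet_singleton _))
  have hunion : μ ({ω | X ω = 1} ∪ {ω | X ω = -1}) = 1 := by
    refine le_antisymm prob_le_one ?_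
    calc (1 : ENNReal) = ENNReal.ofReal (p + (1 - p)) := by simp
      _ ≤ ENNReal.ofReal p + ENNReal.ofReal (1 - p) := ENNReal.ofReal_add_le
      _ = _ := by rw [measure_union hdisj (hX (measurableSet_singleton _)), h1, h2]
  filter_upwards [(ae_iff_measure_eq hm.nullMeasurableSet).2 (hunion.trans measure_univ.symm)]
    with ω hω using hω

lemma measurable_sojournTime {Ω : Type*} [MeasurableSpace Ω] {S : ℕ → Ω → ℤ}
    (hS : ∀ j, Measurable (S j)) (n : ℕ) : Measurable fun ω => sojournTime (fun j => S j ω) n := by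
  refine Finset.measurable_sum _ fun j _ => Measurable.ite ?_ measurable_const measurable_const
  exact (measurableSet_lt measurable_const (hS j)).union
    (((hS j) (measurableSet_singleton 0)).inter (measurableSet_lt measurable_const (hS (j - 1))))

theorem sojourn_odd_rec_general {Ω : Type*} [MeasurableSpace Ω] (μ : Measure Ω)
    [IsProbabilityMeasure μ]
    (p : ℝ)
    (X : ℕ → Ω → ℤ) (hmeas : ∀ i, Measurable (X i))
    (hX1 : ∀ i, μ {ω | X i ω = 1} = ENNReal.ofReal p)
    (hX2 : ∀ i, μ {ω | X i ω = -1} = ENNReal.ofReal (1 - p))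
    (S : ℕ → Ω → ℤ) (hS : ∀ n ω, S n ω = ∑ i ∈ Finset.range n, X i ω)
    (T : ℕ → Ω → ℕ)
    (hT : ∀ n ω, T n ω = ∑ j ∈ Finset.Icc 1 n,
        (if 0 < S j ω ∨ (S j ω = 0 ∧ 0 < S (j - 1) ω) then 1 else 0))
    (n k : ℕ) (hn : Odd n) (hk : Odd k)
    :
    (μ {ω | T n ω = k}).toReal + (μ {ω | T n ω = k + 1}).toReal
      = (μ {ω | T (n + 1) ω = k + 1}).toReal := by
  obtain rfl : T = fun m ω => sojournTime (fun j => S j ω) m := funext fun m => funext (hT m)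
  beta_reduce
  have hwalk : ∀ᵐ ω ∂μ, IsSimpleWalk fun j => S j ω := by
    filter_upwards [ae_all_iff.2 fun i => ae_eq_one_or_eq_neg_one (hmeas i) (hX1 i) (hX2 i)]
      with ω hω
    simpa only [hS] using isSimpleWalk_partialSums hω
  have hevents : {ω | sojournTime (fun j => S j ω) (n + 1) = k + 1} =ᵐ[μ]
      ({ω | sojournTime (fun j => S j ω) n = k} ∪ {ω | sojournTime (fun j => S j ω) n = k + 1} :
        Set Ω) := by
    filter_upwards [hwalk] with ω hω using propext (hω.sojournTime_succ_eq_iff hn hk)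
  have hSmeas : ∀ j, Measurable (S j) := fun j => by
    simpa only [← funext (hS j)] using Finset.measurable_sum (range j) fun i _ => hmeas i
  have hmeas_event : MeasurableSet {ω | sojournTime (fun j => S j ω) n = k + 1} :=
    measurable_sojournTime hSmeas n (measurableSet_singleton _)
  rw [measure_congr hevents,
    measure_union (Set.disjoint_left.2 fun ω h1 h2 => by simp_all) hmeas_event,
    ENNReal.toReal_add (measure_ne_top μ _) (measure_ne_top μ _)]

theorem sojourn_odd_rec {Ω : Type*} [MeasurableSpace Ω] (μ : Measure Ω)
    [IsProbabilityMeasure μ]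
    (p : ℝ) (hp0 : 0 < p) (hp1 : p < 1)
    (X : ℕ → Ω → ℤ) (hmeas : ∀ i, Measurable (X i))
    (hindep : iIndepFun X μ)
    (hX1 : ∀ i, μ {ω | X i ω = 1} = ENNReal.ofReal p)
    (hX2 : ∀ i, μ {ω | X i ω = -1} = ENNReal.ofReal (1 - p))
    (S : ℕ → Ω → ℤ) (hS : ∀ n ω, S n ω = ∑ i ∈ Finset.range n, X i ω)
    (T : ℕ → Ω → ℕ)
    (hT : ∀ n ω, T n ω = ∑ j ∈ Finset.Icc 1 n,
        (if 0 < S j ω ∨ (S j ω = 0 ∧ 0 < S (j - 1) ω) then 1 else 0))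
    (n k : ℕ) (hn : Odd n) (hk : Odd k) (hkn : k ≤ n - 1)
    :
    (μ {ω | T n ω = k}).toReal + (μ {ω | T n ω = k + 1}).toReal
      = (μ {ω | T (n + 1) ω = k + 1}).toReal :=
  sojourn_odd_rec_general μ p X hmeas hX1 hX2 S hS T hT n k hn hk
end
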